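/- arXiv:1304.0566 — 3 statements merged into one kernel-verified Lean document; each statement's English description precedes it below -/
import Mathlib

section
/- Let X be a rooted tree in which every vertex has at least one and at most K children, equipped with the uniformizing metric d_X with parameter ε > 0 and the measure μ with parameter β > log K. For every vertex z ∈ X and every 0 < r ≤ e^{-ε|z|}/ε, the measure of the downward half ball satisfies μ(F(z,r)) ≃ e^{(ε-β)|z|} r, i.e. each side is bounded by a constant multiple of the other with constants depending only on K, ε and β. -/
open MeasureTheory Set
open scoped ENNReal

/-- A rooted (metric) tree in which every vertex has at least one and at most `K`
children, equipped with the uniformizing metric with parameter `ε`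
(`d_X(x,y) = ∫_{[x,y]} e^{-ε|z|} d|z|`, encoded in the definition `UnifTree.d` below) and
the weighted measure `dμ(x) = e^{-β|x|} d|x|` (encoded by the axiom `μ_seg`).

The carrier `X` consists of all points of the metric graph (vertices and edge points);
`h x` is the distance `|x|` to the root in the unweighted (graph) metric, `le x y` means
that `x` lies on the geodesic from the root to `y`, `meet x y` is the largest common
ancestor of `x` and `y`, and `down x t` is the unique point below `x` at level `t`. -/
structure UnifTree (K : ℕ) (ε β : ℝ) where
  X : Type
  mX : MeasurableSpace X
  μ : @MeasureTheory.Measure X mX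
  le : X → X → Prop
  root : X
  h : X → ℝ
  isVertex : X → Prop
  meet : X → X → X
  down : X → ℝ → X
  -- `le` is a partial order with the root as least element, any two ancestors of a
  -- point being comparable
  le_refl : ∀ x, le x x
  le_trans : ∀ x y z, le x y → le y z → le x z
  le_antisymm : ∀ x y, le x y → le y x → x = y
  le_total_below : ∀ x y z, le x z → le y z → (le x y ∨ le y x)
  root_le : ∀ x, le root x
  -- `h` is the level function (graph distance to the root)
  h_root : h root = 0
  h_nonneg : ∀ x, 0 ≤ h x
  h_mono : ∀ x y, le x y → h x ≤ h y
  h_strict : ∀ x y, le x y → h x = h y → x = y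
  -- `meet` is the largest common ancestor
  meet_le_left : ∀ x y, le (meet x y) x
  meet_le_right : ∀ x y, le (meet x y) y
  meet_greatest : ∀ x y z, le z x → le z y → le z (meet x y)
  -- each point has a unique ancestor at every level `t ∈ [0, h x]`
  down_le : ∀ x t, 0 ≤ t → t ≤ h x → le (down x t) x
  h_down : ∀ x t, 0 ≤ t → t ≤ h x → h (down x t) = t
  down_eq : ∀ x y, le y x → down x (h y) = y
  -- vertices sit exactly at the integer levels
  vertex_level : ∀ x, isVertex x → ∃ n : ℕ, h x = n
  level_vertex : ∀ x (n : ℕ), (n : ℝ) ≤ h x → isVertex (down x n)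
  root_vertex : isVertex root
  -- every vertex has at least one and at most `K` children
  children_atLeastOne : ∀ x, isVertex x → ∃ y, isVertex y ∧ le x y ∧ h y = h x + 1
  children_finite : ∀ x, isVertex x → {y | isVertex y ∧ le x y ∧ h y = h x + 1}.Finite
  children_atMostK : ∀ x, isVertex x → {y | isVertex y ∧ le x y ∧ h y = h x + 1}.ncard ≤ K
  -- every point lies on an edge below some vertex
  on_edge : ∀ x, ∃ v, isVertex v ∧ le x v ∧ h v ≤ h x + 1
  -- the measure `μ` is given by `dμ(x) = e^{-β|x|} d|x|`: on each piece of a branch it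
  -- is the weighted length measure
  μ_seg : ∀ x a b, 0 ≤ a → a ≤ b → b ≤ h x →
    μ {y | le y x ∧ a ≤ h y ∧ h y ≤ b} = ENNReal.ofReal (∫ t in a..b, Real.exp (-β * t))

attribute [instance] UnifTree.mX

namespace UnifTree

variable {K : ℕ} {ε β : ℝ}

/-- The uniformizing metric `d_X(x,y) = ∫_{[x,y]} e^{-ε|z|} d|z|`: integrating the weight
`e^{-ε t}` along the geodesic from `x` to `y`, which passes through `meet x y`. -/
noncomputable def d (T : UnifTree K ε β) (x y : T.X) : ℝ :=
  (Real.exp (-ε * T.h (T.meet x y)) - Real.exp (-ε * T.h x)) / ε +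
    (Real.exp (-ε * T.h (T.meet x y)) - Real.exp (-ε * T.h y)) / ε

/-- The open ball with respect to the uniformizing metric. -/
def ball (T : UnifTree K ε β) (x : T.X) (r : ℝ) : Set T.X := {y | T.d x y < r}

/-- The downward directed half ball `F(x,r) = {y ∈ X : y ≥ x and d_X(x,y) < r}`. -/
def halfBall (T : UnifTree K ε β) (x : T.X) (r : ℝ) : Set T.X :=
  {y | T.le x y ∧ T.d x y < r}

/-- The diameter of `X` in the uniformizing metric. -/
noncomputable def diam (T : UnifTree K ε β) : ℝ :=
  sSup {s : ℝ | ∃ x y : T.X, s = T.d x y}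

end UnifTree

private lemma exp_int_upper (β a b : ℝ) (hβ : 0 ≤ β) (hab : a ≤ b) :
    ∫ t in a..b, Real.exp (-β * t) ≤ (b - a) * Real.exp (-β * a) := by
  have hcont : Continuous fun t : ℝ => Real.exp (-β * t) := by fun_prop
  have h := intervalIntegral.integral_mono_on (μ := volume) hab
    (hcont.intervalIntegrable a b) (intervalIntegrable_const (c := Real.exp (-β * a)))
    (fun x hx => by
      apply Real.exp_le_exp.2
      nlinarith [hx.1])
  simpa [smul_eq_mul] using h

private lemma exp_int_lower (β a b : ℝ) (hβ : 0 ≤ β) (hab : a ≤ b) :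
    (b - a) * Real.exp (-β * b) ≤ ∫ t in a..b, Real.exp (-β * t) := by
  have hcont : Continuous fun t : ℝ => Real.exp (-β * t) := by fun_prop
  have h := intervalIntegral.integral_mono_on (μ := volume) hab
    (intervalIntegrable_const (c := Real.exp (-β * b)))
    (hcont.intervalIntegrable a b)
    (fun x hx => by
      apply Real.exp_le_exp.2
      nlinarith [hx.2])
  simpa [smul_eq_mul] using h

namespace UnifTree
variable {K : ℕ} {ε β : ℝ}

lemma meet_self_left (T : UnifTree K ε β) {z y : T.X} (hzy : T.le z y) : T.meet z y = z :=
  T.le_antisymm _ _ (T.meet_le_left z y) (T.meet_greatest z y z (T.le_refl z) hzy)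

lemma d_of_le (T : UnifTree K ε β) {z y : T.X} (hzy : T.le z y) :
    T.d z y = (Real.exp (-ε * T.h z) - Real.exp (-ε * T.h y)) / ε := by
  unfold d; rw [meet_self_left T hzy]; simp

lemma ray (T : UnifTree K ε β) (z : T.X) (hz : T.isVertex z) (m : ℕ) :
    ∃ v, T.isVertex v ∧ T.le z v ∧ T.h v = T.h z + m := by
  induction m with
  | zero => exact ⟨z, hz, T.le_refl z, by simp⟩
  | succ m ih =>
    obtain ⟨v, hv, hzv, hhv⟩ := ih
    obtain ⟨c, hc, hvc, hhc⟩ := T.children_atLeastOne v hv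
    exact ⟨c, hc, T.le_trans _ _ _ hzv hvc, by rw [hhc, hhv]; push_cast; ring⟩

def vset (T : UnifTree K ε β) (z : T.X) (N m : ℕ) : Set T.X :=
  {v | T.isVertex v ∧ T.le z v ∧ T.h v = (N : ℝ) + m}

lemma vset_bound (T : UnifTree K ε β) (z : T.X) (hz : T.isVertex z) (N : ℕ)
    (hN : T.h z = N) (m : ℕ) : (T.vset z N m).Finite ∧ (T.vset z N m).ncard ≤ K ^ m := by
  induction m with
  | zero =>
    have h0 : T.vset z N 0 = {z} := by
      ext v
      simp only [vset, mem_setOf_eq, mem_singleton_iff]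
      constructor
      · rintro ⟨hv, hzv, hhv⟩
        exact (T.h_strict z v hzv (by rw [hN, hhv]; simp)).symm
      · rintro rfl; exact ⟨hz, T.le_refl _, by simp [hN]⟩
    rw [h0]; simp
  | succ m ih =>
    obtain ⟨hfin, hcard⟩ := ih
    classical
    set Fm := hfin.toFinset with hFm
    set t : T.X → Finset T.X := fun w =>
      if h : T.isVertex w then (T.children_finite w h).toFinset else ∅ with ht
    have hsub : T.vset z N (m+1) ⊆ ↑(Fm.biUnion t) := by
      rintro v ⟨hv, hzv, hhv⟩
      have hcast : ((N + m : ℕ) : ℝ) ≤ T.h v := by rw [hhv]; push_cast; linarith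
      have h0 : (0:ℝ) ≤ ((N + m : ℕ) : ℝ) := by positivity
      set w := T.down v (N + m : ℕ) with hw
      have hwv : T.le w v := T.down_le v _ h0 hcast
      have hhw : T.h w = (N : ℝ) + m := by
        have := T.h_down v _ h0 hcast; rw [this]; push_cast; ring
      have hwvert : T.isVertex w := T.level_vertex v (N + m) hcast
      have hzw : T.le z w := by
        rcases T.le_total_below z w v hzv hwv with h | h
        · exact h
        · have h1 : T.h w ≤ T.h z := T.h_mono _ _ h
          have hm0 : (m : ℝ) = 0 := by
            rw [hhw, hN] at h1
            have := Nat.cast_nonneg (α := ℝ) m; linarith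
          have hwz : w = z := T.h_strict w z h (by rw [hhw, hN, hm0]; ring)
          rw [← hwz]; exact T.le_refl w
      have hwFm : w ∈ Fm := by rw [hFm, Set.Finite.mem_toFinset]; exact ⟨hwvert, hzw, hhw⟩
      refine Finset.mem_coe.2 (Finset.mem_biUnion.2 ⟨w, hwFm, ?_⟩)
      rw [ht]; simp only [dif_pos hwvert, Set.Finite.mem_toFinset]
      exact ⟨hv, hwv, by rw [hhv, hhw]; push_cast; ring⟩
    constructor
    · exact (Fm.biUnion t).finite_toSet.subset hsub
    · have hFmcard : Fm.card = (T.vset z N m).ncard :=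
        (Set.ncard_eq_toFinset_card _ hfin).symm
      calc (T.vset z N (m+1)).ncard ≤ (↑(Fm.biUnion t) : Set T.X).ncard :=
            Set.ncard_le_ncard hsub (Fm.biUnion t).finite_toSet
        _ = (Fm.biUnion t).card := Set.ncard_coe_finset _
        _ ≤ ∑ w ∈ Fm, (t w).card := Finset.card_biUnion_le
        _ ≤ ∑ w ∈ Fm, K := Finset.sum_le_sum (fun w hw => by
            rw [hFm, Set.Finite.mem_toFinset] at hw
            rw [ht]; simp only [dif_pos hw.1]
            rw [← Set.ncard_eq_toFinset_card _ (T.children_finite w hw.1)]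
            exact T.children_atMostK w hw.1)
        _ = Fm.card * K := by rw [Finset.sum_const, smul_eq_mul]
        _ ≤ K ^ m * K := by rw [hFmcard]; exact Nat.mul_le_mul_right K hcard
        _ = K ^ (m+1) := by ring

end UnifTree

set_option maxHeartbeats 1000000 in

/-- for a rooted tree whose vertices have at least one and at most K
children, with the uniformizing metric of parameter ε > 0 and the measure of parameter
β > log K, the downward half balls satisfy `μ(F(z,r)) ≃ e^{(ε-β)|z|} r` for all vertices
`z` and `0 < r ≤ e^{-ε|z|}/ε`, with comparison constants depending only on K, ε, β. -/
theorem statement0 (K : ℕ) (ε β : ℝ) (hε : 0 < ε) (hβ : Real.log K < β) :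
    ∃ C : ℝ, 0 < C ∧ ∀ (T : UnifTree K ε β) (z : T.X), T.isVertex z →
      ∀ r : ℝ, 0 < r → r ≤ Real.exp (-ε * T.h z) / ε →
        ENNReal.ofReal (C⁻¹ * (Real.exp ((ε - β) * T.h z) * r)) ≤ T.μ (T.halfBall z r) ∧
          T.μ (T.halfBall z r) ≤
            ENNReal.ofReal (C * (Real.exp ((ε - β) * T.h z) * r)) := by
  classical
  have hβ0 : 0 < β := by
    rcases Nat.eq_zero_or_pos K with hK | hK
    · subst hK; simpa using hβ
    · exact lt_of_le_of_lt (Real.log_nonneg (by exact_mod_cast hK)) hβ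
  set q := (K:ℝ) * Real.exp (-β) with hqdef
  have hq0 : (0:ℝ) ≤ q := by positivity
  have hq1 : q < 1 := by
    rcases Nat.eq_zero_or_pos K with hK | hK
    · subst hK; simp [hqdef]
    · have hKe : (K:ℝ) < Real.exp β := by
        rw [← Real.exp_log (by exact_mod_cast hK : (0:ℝ) < (K:ℝ))]
        exact Real.exp_lt_exp.2 hβ
      rw [hqdef, Real.exp_neg]
      rw [mul_inv_lt_iff₀ (Real.exp_pos β)]
      linarith
  have heps1 : Real.exp (-ε) < 1 := by
    rw [Real.exp_lt_one_iff]; linarith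
  set C := 2 * Real.exp (β/(2*ε)) + (K:ℝ) * Real.exp ε +
    ε * K / ((1 - q) * (1 - Real.exp (-ε))) with hCdef
  have hC2 : (0:ℝ) ≤ (K:ℝ) * Real.exp ε := by positivity
  have hC3 : (0:ℝ) ≤ ε * K / ((1 - q) * (1 - Real.exp (-ε))) := by
    apply div_nonneg (by positivity)
    apply mul_nonneg <;> linarith
  have hC1 : (0:ℝ) < 2 * Real.exp (β/(2*ε)) := by positivity
  have hCpos : 0 < C := by rw [hCdef]; linarith
  clear_value q C
  refine ⟨C, hCpos, ?_⟩
  intro T z hz r hr hrle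
  obtain ⟨N, hN⟩ := T.vertex_level z hz
  set n := T.h z with hn
  have hn0 : 0 ≤ n := T.h_nonneg z
  set ρ := ε * r * Real.exp (ε * n) with hρdef
  have hρ0 : 0 < ρ := by positivity
  have hexpsum : Real.exp (-ε*n) * Real.exp (ε*n) = 1 := by
    rw [← Real.exp_add]; simp
  have hρ1 : ρ ≤ 1 := by
    have h1 : ε * r ≤ Real.exp (-ε*n) := by
      rw [le_div_iff₀ hε] at hrle; linarith
    calc ρ = (ε*r) * Real.exp (ε*n) := by rw [hρdef]
      _ ≤ Real.exp (-ε*n) * Real.exp (ε*n) := by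
          have := Real.exp_pos (ε*n); nlinarith
      _ = 1 := hexpsum
  have hρr : Real.exp (-ε*n) * ρ = ε * r := by
    rw [hρdef, show Real.exp (-ε*n) * (ε*r*Real.exp (ε*n))
      = (Real.exp (-ε*n)*Real.exp (ε*n))*(ε*r) from by ring, hexpsum, one_mul]
  have hkey : Real.exp ((ε-β)*n) * r = Real.exp (-β*n) * ρ / ε := by
    rw [hρdef, show (ε-β)*n = -β*n + ε*n by ring, Real.exp_add]
    field_simp
  clear_value n ρ
  -- membership in half-balls
  have hmemF : ∀ y : T.X, T.le z y →
      (y ∈ T.halfBall z r ↔ Real.exp (-ε*n) - Real.exp (-ε * T.h y) < ε * r) := by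
    intro y hzy
    constructor
    · rintro ⟨-, hd⟩
      rw [T.d_of_le hzy, div_lt_iff₀ hε] at hd; rw [hn]; linarith
    · intro h
      refine ⟨hzy, ?_⟩
      rw [T.d_of_le hzy, div_lt_iff₀ hε]; rw [hn] at h; linarith
  constructor
  · -- LOWER BOUND
    set w := ρ / (2*ε) with hwdef
    have hw0 : 0 < w := by positivity
    have hwle : w ≤ 1/(2*ε) := by
      rw [hwdef]; gcongr
    obtain ⟨x, hxv, hzx, hhx⟩ := T.ray z hz ⌈w⌉₊
    have hback : n + w ≤ T.h x := by
      rw [hhx, ← hn]; have := Nat.le_ceil w; linarith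
    have hμS := T.μ_seg x n (n+w) hn0 (by linarith) hback
    have hSsub : {y | T.le y x ∧ n ≤ T.h y ∧ T.h y ≤ n + w} ⊆ T.halfBall z r := by
      rintro y ⟨hyx, hy1, hy2⟩
      have hzy : T.le z y := by
        rcases T.le_total_below z y x hzx hyx with h | h
        · exact h
        · have h1 : T.h y ≤ n := by rw [hn]; exact T.h_mono _ _ h
          have hyz : y = z := T.h_strict y z h (by rw [← hn]; linarith)
          rw [hyz]; exact T.le_refl z
      rw [hmemF y hzy]
      have h1 : Real.exp (-ε*(n+w)) ≤ Real.exp (-ε * T.h y) :=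
        Real.exp_le_exp.2 (by nlinarith)
      have h2 : 1 - ε*w ≤ Real.exp (-(ε*w)) := by
        have := Real.add_one_le_exp (-(ε*w)); linarith
      have h3 : Real.exp (-ε*(n+w)) = Real.exp (-ε*n) * Real.exp (-(ε*w)) := by
        rw [← Real.exp_add]; ring_nf
      have h5 : Real.exp (-ε*n) * (ε*w) = ε*r/2 := by
        have : ε * w = ρ/2 := by rw [hwdef]; field_simp
        rw [this]; linarith [hρr]
      have hmul := mul_le_mul_of_nonneg_left h2 (Real.exp_pos (-ε*n)).le
      nlinarith [Real.exp_pos (-ε*n), hmul]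
    calc ENNReal.ofReal (C⁻¹ * (Real.exp ((ε-β)*n) * r))
        ≤ ENNReal.ofReal ((n + w - n) * Real.exp (-β * (n+w))) := by
          apply ENNReal.ofReal_le_ofReal
          have hCinv : C⁻¹ ≤ Real.exp (-(β/(2*ε)))/2 := by
            rw [Real.exp_neg]
            rw [show (Real.exp (β/(2*ε)))⁻¹ / 2 = (2 * Real.exp (β/(2*ε)))⁻¹ by
              rw [mul_comm]; rw [mul_inv]; ring]
            apply inv_anti₀ hC1
            rw [hCdef]; linarith
          have hbw : Real.exp (-(β/(2*ε))) ≤ Real.exp (-(β*w)) := by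
            apply Real.exp_le_exp.2
            have : β * w ≤ β * (1/(2*ε)) := by
              apply mul_le_mul_of_nonneg_left hwle hβ0.le
            rw [mul_one_div] at this; linarith
          rw [hkey]
          have hpos : (0:ℝ) ≤ Real.exp (-β*n) * ρ / ε := by positivity
          calc C⁻¹ * (Real.exp (-β*n) * ρ / ε)
              ≤ (Real.exp (-(β/(2*ε)))/2) * (Real.exp (-β*n) * ρ / ε) := by
                apply mul_le_mul_of_nonneg_right hCinv hpos
            _ = w * (Real.exp (-β*n) * Real.exp (-(β/(2*ε)))) := by
                rw [hwdef]; field_simp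
            _ ≤ w * (Real.exp (-β*n) * Real.exp (-(β*w))) := by
                apply mul_le_mul_of_nonneg_left _ hw0.le
                apply mul_le_mul_of_nonneg_left hbw (Real.exp_pos _).le
            _ = (n + w - n) * Real.exp (-β*(n+w)) := by
                rw [← Real.exp_add]; ring_nf
      _ ≤ ENNReal.ofReal (∫ t in n..(n+w), Real.exp (-β*t)) :=
          ENNReal.ofReal_le_ofReal (exp_int_lower β n (n+w) hβ0.le (by linarith))
      _ = T.μ {y | T.le y x ∧ n ≤ T.h y ∧ T.h y ≤ n + w} := hμS.symm
      _ ≤ T.μ (T.halfBall z r) := measure_mono hSsub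
  · -- UPPER BOUND
    by_cases hcase : ρ ≤ 1 - Real.exp (-ε)
    · -- Case A : small radius
      have hρlt : ρ < 1 := lt_of_le_of_lt hcase (by nlinarith [Real.exp_pos (-ε)])
      have h1ρ : 0 < 1 - ρ := by linarith
      set u := -Real.log (1-ρ) / ε with hudef
      have hεu : ε * u = -Real.log (1-ρ) := by rw [hudef]; field_simp
      have hexpu : Real.exp (-(ε*u)) = 1 - ρ := by rw [hεu, neg_neg, Real.exp_log h1ρ]
      have hu0 : 0 < u := by
        have hlog := Real.log_neg h1ρ (by linarith : 1 - ρ < 1)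
        rw [hudef]; apply div_pos (by linarith) hε
      have hu1 : u ≤ 1 := by
        rw [hudef, div_le_one hε]
        have hlog2 : -ε ≤ Real.log (1-ρ) := (Real.le_log_iff_exp_le h1ρ).2 (by linarith)
        linarith
      have hCzfin := T.children_finite z hz
      set Fc := hCzfin.toFinset with hFc
      have hFcK : Fc.card ≤ K := by
        rw [hFc, ← Set.ncard_eq_toFinset_card _ hCzfin]; exact T.children_atMostK z hz
      have hsub : T.halfBall z r ⊆
          ⋃ c ∈ Fc, {y | T.le y c ∧ n ≤ T.h y ∧ T.h y ≤ n + u} := by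
        intro y hy
        obtain ⟨hzy, hd⟩ := hy
        have hdy : T.h y < n + u := by
          have hlt := (hmemF y hzy).1 ⟨hzy, hd⟩
          have he3 : Real.exp (-ε*(n+u)) = Real.exp (-ε*n) * Real.exp (-(ε*u)) := by
            rw [← Real.exp_add]; ring_nf
          have he : Real.exp (-ε*n) - ε*r = Real.exp (-ε*(n+u)) := by
            rw [he3, hexpu]; linarith [hρr]
          have h2 : Real.exp (-ε*(n+u)) < Real.exp (-ε * T.h y) := by linarith
          have h4 := Real.exp_lt_exp.1 h2
          nlinarith
        rcases eq_or_ne y z with rfl | hne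
        · obtain ⟨c, hc, hzc, hhc⟩ := T.children_atLeastOne y hz
          refine Set.mem_iUnion₂.2 ⟨c, ?_, ?_⟩
          · rw [hFc, Set.Finite.mem_toFinset]; exact ⟨hc, hzc, hhc⟩
          · exact ⟨hzc, hn.le, by rw [← hn]; linarith⟩
        · obtain ⟨v, hv, hyv, hhv⟩ := T.on_edge y
          obtain ⟨M, hM⟩ := T.vertex_level v hv
          have hyge : n ≤ T.h y := by rw [hn]; exact T.h_mono _ _ hzy
          have hyn : n < T.h y := by
            rcases hyge.lt_or_eq with h | h
            · exact h
            · exact absurd (T.h_strict z y hzy (by rw [← hn, ← h])).symm hne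
          have hMge : (N:ℝ) < M := by rw [← hM]; have := T.h_mono _ _ hyv; rw [← hN]; linarith
          have hMle : (M:ℝ) < (N:ℝ) + 2 := by rw [← hM, ← hN]; linarith
          have hMeq : M = N + 1 := by
            have e1 : N < M := by exact_mod_cast hMge
            have e2 : M < N + 2 := by exact_mod_cast hMle
            omega
          refine Set.mem_iUnion₂.2 ⟨v, ?_, ?_⟩
          · rw [hFc, Set.Finite.mem_toFinset]
            refine ⟨hv, T.le_trans _ _ _ hzy hyv, ?_⟩
            rw [hM, hMeq, ← hn, hN]; push_cast; ring
          · exact ⟨hyv, hyge, hdy.le⟩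
      have hseg : ∀ c ∈ Fc, T.μ {y | T.le y c ∧ n ≤ T.h y ∧ T.h y ≤ n + u}
          ≤ ENNReal.ofReal (u * Real.exp (-β*n)) := by
        intro c hc
        rw [hFc, Set.Finite.mem_toFinset] at hc
        have hhc : T.h c = n + 1 := by rw [hc.2.2, ← hn]
        rw [T.μ_seg c n (n+u) hn0 (by linarith) (by rw [hhc]; linarith)]
        apply ENNReal.ofReal_le_ofReal
        have h2 := exp_int_upper β n (n+u) hβ0.le (by linarith)
        have h3 : n + u - n = u := by ring
        rw [h3] at h2; exact h2
      calc T.μ (T.halfBall z r)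
          ≤ T.μ (⋃ c ∈ Fc, {y | T.le y c ∧ n ≤ T.h y ∧ T.h y ≤ n + u}) := measure_mono hsub
        _ ≤ ∑ c ∈ Fc, T.μ {y | T.le y c ∧ n ≤ T.h y ∧ T.h y ≤ n + u} :=
            measure_biUnion_finset_le _ _
        _ ≤ ∑ _c ∈ Fc, ENNReal.ofReal (u * Real.exp (-β*n)) := Finset.sum_le_sum hseg
        _ = (Fc.card : ℝ≥0∞) * ENNReal.ofReal (u * Real.exp (-β*n)) := by
            rw [Finset.sum_const, nsmul_eq_mul]
        _ ≤ (K : ℝ≥0∞) * ENNReal.ofReal (u * Real.exp (-β*n)) := by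
            apply mul_le_mul_left
            exact_mod_cast Nat.cast_le.2 hFcK
        _ = ENNReal.ofReal ((K:ℝ) * (u * Real.exp (-β*n))) := by
            rw [← ENNReal.ofReal_natCast K, ← ENNReal.ofReal_mul (by positivity)]
        _ ≤ ENNReal.ofReal (C * (Real.exp ((ε-β)*n) * r)) := by
            apply ENNReal.ofReal_le_ofReal
            rw [hkey]
            have hu_le : u ≤ Real.exp ε * ρ / ε := by
              have hb1 : ε*u + 1 ≤ Real.exp (ε*u) := Real.add_one_le_exp _
              have hb2 : Real.exp (ε*u) * Real.exp (-(ε*u)) = 1 := by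
                rw [← Real.exp_add]; simp
              have hb3 : ε*u*Real.exp (-(ε*u)) ≤ ρ := by
                nlinarith [Real.exp_pos (-(ε*u))]
              have hb4 : Real.exp (-ε) ≤ Real.exp (-(ε*u)) := by
                apply Real.exp_le_exp.2; nlinarith
              have hb5 : ε*u*Real.exp (-ε) ≤ ρ := by nlinarith [Real.exp_pos (-ε)]
              have hb6 : Real.exp (-ε) * Real.exp ε = 1 := by rw [← Real.exp_add]; simp
              rw [le_div_iff₀ hε]
              have hb7 : (ε*u*Real.exp (-ε)) * Real.exp ε ≤ ρ * Real.exp ε :=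
                mul_le_mul_of_nonneg_right hb5 (Real.exp_pos ε).le
              nlinarith [hb6, hb7]
            have hKC : (K:ℝ) * Real.exp ε ≤ C := by rw [hCdef]; linarith
            calc (K:ℝ) * (u * Real.exp (-β*n))
                ≤ (K:ℝ) * ((Real.exp ε * ρ/ε) * Real.exp (-β*n)) := by
                  apply mul_le_mul_of_nonneg_left _ (Nat.cast_nonneg K)
                  exact mul_le_mul_of_nonneg_right hu_le (Real.exp_pos _).le
              _ = ((K:ℝ) * Real.exp ε) * (Real.exp (-β*n) * ρ/ε) := by ring
              _ ≤ C * (Real.exp (-β*n) * ρ/ε) := by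
                  apply mul_le_mul_of_nonneg_right hKC
                  exact div_nonneg (mul_nonneg (Real.exp_pos _).le hρ0.le) hε.le
    · -- Case B : large radius
      push_neg at hcase
      have hNz : T.h z = N := by rw [← hn]; exact hN
      have Vfin : ∀ m : ℕ, (T.vset z N m).Finite := fun m => (T.vset_bound z hz N hNz m).1
      set seg : ℕ → T.X → Set T.X :=
        fun m v => {y | T.le y v ∧ (N:ℝ)+m ≤ T.h y ∧ T.h y ≤ (N:ℝ)+m+1} with hsegdef
      have hsub : T.halfBall z r ⊆ ⋃ m : ℕ, ⋃ v ∈ (Vfin (m+1)).toFinset, seg m v := by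
        intro y hy
        obtain ⟨hzy, -⟩ := hy
        have hyn : n ≤ T.h y := by rw [hn]; exact T.h_mono _ _ hzy
        set m := ⌊T.h y - n⌋₊ with hm
        have hm1 : (m:ℝ) ≤ T.h y - n := Nat.floor_le (by linarith)
        have hm2 : T.h y - n < m + 1 := Nat.lt_floor_add_one _
        have hy1 : (N:ℝ) + m ≤ T.h y := by rw [← hN]; linarith
        have hy2 : T.h y < (N:ℝ) + m + 1 := by rw [← hN]; linarith
        obtain ⟨v0, hv0, hyv0, hhv0⟩ := T.on_edge y
        have hfind : ∃ v, v ∈ T.vset z N (m+1) ∧ T.le y v := by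
          by_cases hvc : (N:ℝ)+m+1 ≤ T.h v0
          · have hc0 : (0:ℝ) ≤ ((N+m+1 : ℕ):ℝ) := by positivity
            have hc1 : ((N+m+1:ℕ):ℝ) ≤ T.h v0 := by push_cast; linarith
            have hvv0 := T.down_le v0 _ hc0 hc1
            have hhv : T.h (T.down v0 ((N+m+1:ℕ):ℝ)) = ((N+m+1:ℕ):ℝ) :=
              T.h_down v0 _ hc0 hc1
            have hyv : T.le y (T.down v0 ((N+m+1:ℕ):ℝ)) := by
              rcases T.le_total_below y _ v0 hyv0 hvv0 with h | h
              · exact h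
              · exfalso
                have := T.h_mono _ _ h
                rw [hhv] at this; push_cast at this; linarith
            exact ⟨_, ⟨T.level_vertex v0 (N+m+1) hc1,
              T.le_trans _ _ _ hzy hyv, by rw [hhv]; push_cast; ring⟩, hyv⟩
          · push_neg at hvc
            obtain ⟨M, hM⟩ := T.vertex_level v0 hv0
            have hyle : T.h y ≤ T.h v0 := T.h_mono _ _ hyv0
            have h3 : M = N + m := by
              have e1 : N + m ≤ M := by
                have : ((N+m:ℕ):ℝ) ≤ (M:ℝ) := by rw [← hM]; push_cast; linarith
                exact_mod_cast this
              have e2 : M < N + m + 1 := by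
                have : (M:ℝ) < ((N+m+1:ℕ):ℝ) := by rw [← hM]; push_cast; linarith
                exact_mod_cast this
              omega
            have hv0h : T.h v0 = (N:ℝ)+m := by rw [hM, h3]; push_cast; ring
            have heq : T.h y = T.h v0 := le_antisymm hyle (by rw [hv0h]; linarith)
            have hyv0' : y = v0 := T.h_strict y v0 hyv0 heq
            have hyvert : T.isVertex y := by rw [hyv0']; exact hv0
            obtain ⟨c, hc, hyc, hhc⟩ := T.children_atLeastOne y hyvert
            refine ⟨c, ⟨hc, T.le_trans _ _ _ hzy hyc, ?_⟩, hyc⟩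
            rw [hhc, heq, hv0h]; push_cast; ring
        obtain ⟨v, hvmem, hyv⟩ := hfind
        refine Set.mem_iUnion.2 ⟨m, Set.mem_iUnion₂.2 ⟨v, ?_, ?_⟩⟩
        · rw [Set.Finite.mem_toFinset]; exact hvmem
        · exact ⟨hyv, hy1, hy2.le⟩
      have hsegμ : ∀ m : ℕ, ∀ v ∈ (Vfin (m+1)).toFinset,
          T.μ (seg m v) ≤ ENNReal.ofReal (Real.exp (-β*((N:ℝ)+m))) := by
        intro m v hv
        rw [Set.Finite.mem_toFinset] at hv
        obtain ⟨hvv, hzv, hvh⟩ := hv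
        have hvh' : T.h v = (N:ℝ)+m+1 := by rw [hvh]; push_cast; ring
        have hμseg := T.μ_seg v ((N:ℝ)+m) ((N:ℝ)+m+1) (by positivity) (by linarith)
          (by rw [hvh'])
        rw [show seg m v = {y | T.le y v ∧ (N:ℝ)+m ≤ T.h y ∧ T.h y ≤ (N:ℝ)+m+1} from rfl,
          hμseg]
        apply ENNReal.ofReal_le_ofReal
        have h2 := exp_int_upper β ((N:ℝ)+m) ((N:ℝ)+m+1) hβ0.le (by linarith)
        have h3 : ((N:ℝ)+m+1) - ((N:ℝ)+m) = 1 := by ring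
        rw [h3, one_mul] at h2; exact h2
      have hterm : ∀ m : ℕ, (K:ℝ≥0∞)^(m+1) * ENNReal.ofReal (Real.exp (-β*((N:ℝ)+m)))
          = ENNReal.ofReal (((K:ℝ)*Real.exp (-β*n)) * q^m) := by
        intro m
        rw [← ENNReal.ofReal_natCast K, ← ENNReal.ofReal_pow (Nat.cast_nonneg K),
          ← ENNReal.ofReal_mul (by positivity)]
        congr 1
        rw [hqdef, mul_pow, ← Real.exp_nat_mul, hN]
        rw [show -β*((N:ℝ)+(m:ℕ)) = -β*(N:ℝ) + (m:ℕ)*(-β) by ring, Real.exp_add]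
        ring
      have hgsum : Summable (fun m : ℕ => ((K:ℝ)*Real.exp (-β*n)) * q^m) :=
        (summable_geometric_of_lt_one hq0 hq1).mul_left _
      calc T.μ (T.halfBall z r)
          ≤ T.μ (⋃ m : ℕ, ⋃ v ∈ (Vfin (m+1)).toFinset, seg m v) := measure_mono hsub
        _ ≤ ∑' m : ℕ, T.μ (⋃ v ∈ (Vfin (m+1)).toFinset, seg m v) := measure_iUnion_le _
        _ ≤ ∑' m : ℕ, ENNReal.ofReal (((K:ℝ)*Real.exp (-β*n)) * q^m) := by
            apply ENNReal.tsum_le_tsum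
            intro m
            rw [← hterm m]
            calc T.μ (⋃ v ∈ (Vfin (m+1)).toFinset, seg m v)
                ≤ ∑ v ∈ (Vfin (m+1)).toFinset, T.μ (seg m v) :=
                  measure_biUnion_finset_le _ _
              _ ≤ ∑ _v ∈ (Vfin (m+1)).toFinset,
                    ENNReal.ofReal (Real.exp (-β*((N:ℝ)+m))) :=
                  Finset.sum_le_sum (hsegμ m)
              _ = ((Vfin (m+1)).toFinset.card : ℝ≥0∞)
                    * ENNReal.ofReal (Real.exp (-β*((N:ℝ)+m))) := by
                  rw [Finset.sum_const, nsmul_eq_mul]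
              _ ≤ (K:ℝ≥0∞)^(m+1) * ENNReal.ofReal (Real.exp (-β*((N:ℝ)+m))) := by
                  apply mul_le_mul_left
                  have hcard := (T.vset_bound z hz N hNz (m+1)).2
                  rw [← Set.ncard_eq_toFinset_card _ (Vfin (m+1))]
                  calc ((T.vset z N (m+1)).ncard : ℝ≥0∞) ≤ ((K^(m+1) : ℕ) : ℝ≥0∞) := by
                        exact_mod_cast hcard
                    _ = (K:ℝ≥0∞)^(m+1) := by push_cast; ring
        _ = ENNReal.ofReal (((K:ℝ)*Real.exp (-β*n)) * (1-q)⁻¹) := by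
            rw [← ENNReal.ofReal_tsum_of_nonneg
              (fun m => mul_nonneg (by positivity) (pow_nonneg hq0 m)) hgsum]
            congr 1
            rw [tsum_mul_left, tsum_geometric_of_lt_one hq0 hq1]
        _ ≤ ENNReal.ofReal (C * (Real.exp ((ε-β)*n) * r)) := by
            apply ENNReal.ofReal_le_ofReal
            rw [hkey]
            have h1q : (0:ℝ) < 1 - q := by linarith
            have he0 : (0:ℝ) < 1 - Real.exp (-ε) := by linarith
            have hCge : ε * K / ((1-q)*(1-Real.exp (-ε))) ≤ C := by rw [hCdef]; linarith
            have hmain : ε*(K:ℝ)/(1-q) ≤ C*ρ := by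
              have s1 : (ε*K/((1-q)*(1-Real.exp (-ε)))) * (1-Real.exp (-ε)) ≤ C * ρ :=
                calc (ε*K/((1-q)*(1-Real.exp (-ε)))) * (1-Real.exp (-ε))
                    ≤ C * (1-Real.exp (-ε)) := mul_le_mul_of_nonneg_right hCge he0.le
                  _ ≤ C * ρ := mul_le_mul_of_nonneg_left hcase.le hCpos.le
              calc ε*(K:ℝ)/(1-q)
                  = (ε*K/((1-q)*(1-Real.exp (-ε)))) * (1-Real.exp (-ε)) := by
                    field_simp
                _ ≤ C*ρ := s1
            calc (K:ℝ)*Real.exp (-β*n) * (1-q)⁻¹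
                = (ε*(K:ℝ)/(1-q)) * (Real.exp (-β*n)/ε) := by field_simp
              _ ≤ (C*ρ) * (Real.exp (-β*n)/ε) := by
                  apply mul_le_mul_of_nonneg_right hmain (by positivity)
              _ = C * (Real.exp (-β*n) * ρ/ε) := by ring
end

section
/- Let X be a rooted tree in which every vertex has at least one and at most K children, equipped with the uniformizing metric d_X with parameter ε > 0 and the measure μ with parameter β > log K. For every vertex x ∈ X and every radius r with e^{-ε|x|}/ε ≤ r ≤ (1 - e^{-ε|x|})/ε, one has μ(B(x,r)) ≃ r^{β/ε}, with comparison constants depending only on K, ε and β. -/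
open MeasureTheory Set
open scoped ENNReal

section Aux

lemma neg_mul_mono {c a b : ℝ} (hc : 0 ≤ c) (h : a ≤ b) : -c * b ≤ -c * a := by nlinarith

lemma lt_of_neg_mul_lt {c a b : ℝ} (hc : 0 < c) (h : -c * a < -c * b) : b < a := by nlinarith


namespace UnifTree

variable {K : ℕ} {ε β : ℝ}

lemma one_le_K (T : UnifTree K ε β) : 1 ≤ K := by
  by_contra hK
  push_neg at hK
  interval_cases K
  obtain ⟨y, hy⟩ := T.children_atLeastOne T.root T.root_vertex
  have hfin := T.children_finite T.root T.root_vertex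
  have hcard := T.children_atMostK T.root T.root_vertex
  have : 0 < {y | T.isVertex y ∧ T.le T.root y ∧ T.h y = T.h T.root + 1}.ncard :=
    (Set.ncard_pos hfin).mpr ⟨y, hy⟩
  omega

lemma le_of_h_le (T : UnifTree K ε β) {a b c : T.X} (hac : T.le a c) (hbc : T.le b c)
    (hab : T.h a ≤ T.h b) : T.le a b := by
  rcases T.le_total_below a b c hac hbc with h | h
  · exact h
  · have h1 := T.h_mono b a h
    have heq : T.h b = T.h a := _root_.le_antisymm h1 hab
    rw [T.h_strict b a h heq]
    exact T.le_refl a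

lemma exists_vertex_at (T : UnifTree K ε β) :
    ∀ (n : ℕ) (v : T.X), T.isVertex v → T.h v ≤ n →
      ∃ w, T.isVertex w ∧ T.le v w ∧ T.h w = n := by
  intro n
  induction n with
  | zero =>
    intro v hv hle
    exact ⟨v, hv, T.le_refl v, _root_.le_antisymm (by exact_mod_cast hle) (by exact_mod_cast T.h_nonneg v)⟩
  | succ n ih =>
    intro v hv hle
    obtain ⟨m, hm⟩ := T.vertex_level v hv
    by_cases hmn : m ≤ n
    · obtain ⟨w, hw, hvw, hwn⟩ := ih v hv (by rw [hm]; exact_mod_cast hmn)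
      obtain ⟨y, hy, hwy, hhy⟩ := T.children_atLeastOne w hw
      refine ⟨y, hy, T.le_trans v w y hvw hwy, ?_⟩
      rw [hhy, hwn]; push_cast; ring
    · have hmn' : m = n + 1 := by
        have h1 := hle
        rw [hm] at h1
        have h2 : m ≤ n + 1 := by exact_mod_cast h1
        omega
      exact ⟨v, hv, T.le_refl v, by rw [hm]; exact_mod_cast hmn'⟩

lemma exists_vertex_above (T : UnifTree K ε β) (x : T.X) (n : ℕ) (hn : T.h x ≤ n) :
    ∃ v, T.isVertex v ∧ T.le x v ∧ T.h v = n := by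
  obtain ⟨v, hv, hxv, hhv⟩ := T.on_edge x
  obtain ⟨m, hm⟩ := T.vertex_level v hv
  by_cases hmn : m ≤ n
  · obtain ⟨w, hw, hvw, hwn⟩ := T.exists_vertex_at n v hv (by rw [hm]; exact_mod_cast hmn)
    exact ⟨w, hw, T.le_trans x v w hxv hvw, hwn⟩
  · have hnv : (n : ℝ) ≤ T.h v := by
      rw [hm]; exact_mod_cast Nat.le_of_lt (lt_of_not_ge hmn)
    have h0n : (0 : ℝ) ≤ (n : ℝ) := by positivity
    refine ⟨T.down v n, T.level_vertex v n hnv, ?_, T.h_down v n h0n hnv⟩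
    exact T.le_of_h_le hxv (T.down_le v n h0n hnv) (by rw [T.h_down v n h0n hnv]; exact hn)

/-- The set of children of a vertex. -/
def chil (T : UnifTree K ε β) (v : T.X) : Set T.X :=
  {y | T.isVertex y ∧ T.le v y ∧ T.h y = T.h v + 1}

lemma chil_finite (T : UnifTree K ε β) {v : T.X} (hv : T.isVertex v) : (T.chil v).Finite :=
  T.children_finite v hv

lemma chil_card (T : UnifTree K ε β) {v : T.X} (hv : T.isVertex v) : (T.chil v).ncard ≤ K :=
  T.children_atMostK v hv

/-- The set of vertices at level `n` lying above `z`. -/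
def V (T : UnifTree K ε β) (z : T.X) (n : ℕ) : Set T.X :=
  {v | T.isVertex v ∧ T.le z v ∧ T.h v = n}

lemma V_card (T : UnifTree K ε β) (z : T.X) (k : ℕ) :
    (T.V z (⌈T.h z⌉₊ + k)).Finite ∧ (T.V z (⌈T.h z⌉₊ + k)).ncard ≤ K ^ (k + 1) := by
  classical
  induction k with
  | zero =>
    rcases eq_or_lt_of_le (Nat.le_ceil (T.h z)) with heq | hlt
    · have hsub : T.V z (⌈T.h z⌉₊ + 0) ⊆ {z} := by
        rintro v ⟨hv1, hv2, hv3⟩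
        have : T.h z = T.h v := by rw [hv3]; push_cast; linarith [heq]
        exact Set.mem_singleton_iff.mpr (T.h_strict z v hv2 this).symm
      refine ⟨(Set.finite_singleton z).subset hsub, ?_⟩
      calc (T.V z (⌈T.h z⌉₊ + 0)).ncard ≤ ({z} : Set T.X).ncard :=
            Set.ncard_le_ncard hsub (Set.finite_singleton z)
        _ = 1 := Set.ncard_singleton z
        _ ≤ K ^ (0 + 1) := by simpa using T.one_le_K
    · have hn0 : ⌈T.h z⌉₊ ≠ 0 := by
        intro h0
        rw [h0] at hlt
        exact absurd hlt (not_lt.mpr (by exact_mod_cast T.h_nonneg z))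
      set m : ℕ := ⌈T.h z⌉₊ - 1 with hmdef
      have hm1 : m + 1 = ⌈T.h z⌉₊ := by omega
      have hml : (m : ℝ) < T.h z := by
        by_contra hc
        push_neg at hc
        have := Nat.ceil_le.mpr hc
        omega
      have hm0 : (0 : ℝ) ≤ (m : ℝ) := by positivity
      have hmle : (m : ℝ) ≤ T.h z := le_of_lt hml
      have hw0v : T.isVertex (T.down z m) := T.level_vertex z m hmle
      have hw0h : T.h (T.down z m) = m := T.h_down z m hm0 hmle
      have hsub : T.V z (⌈T.h z⌉₊ + 0) ⊆ T.chil (T.down z m) := by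
        rintro v ⟨hv1, hv2, hv3⟩
        refine ⟨hv1, T.le_trans _ z v (T.down_le z m hm0 hmle) hv2, ?_⟩
        rw [hv3, hw0h, ← hm1]
        push_cast; ring
      refine ⟨(T.chil_finite hw0v).subset hsub, ?_⟩
      calc (T.V z (⌈T.h z⌉₊ + 0)).ncard ≤ (T.chil (T.down z m)).ncard :=
            Set.ncard_le_ncard hsub (T.chil_finite hw0v)
        _ ≤ K := T.chil_card hw0v
        _ ≤ K ^ (0 + 1) := by simp
  | succ k ih =>
    obtain ⟨hfin, hcard⟩ := ih
    set n : ℕ := ⌈T.h z⌉₊ + k with hndef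
    have hzn : T.h z ≤ (n : ℝ) := by
      calc T.h z ≤ (⌈T.h z⌉₊ : ℝ) := Nat.le_ceil _
        _ ≤ (n : ℝ) := by exact_mod_cast Nat.le_add_right _ k
    set s : Finset T.X := hfin.toFinset with hsdef
    set f : T.X → Finset T.X :=
      fun v => if hv : T.isVertex v then (T.chil_finite hv).toFinset else ∅ with hfdef
    have hsub : T.V z (⌈T.h z⌉₊ + (k + 1)) ⊆ ↑(s.biUnion f) := by
      rintro w ⟨hw1, hw2, hw3⟩
      have hw3' : T.h w = (n : ℝ) + 1 := by rw [hw3]; push_cast [hndef]; ring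
      have hnw : (n : ℝ) ≤ T.h w := by rw [hw3']; linarith
      have h0n : (0 : ℝ) ≤ (n : ℝ) := by positivity
      have hvtx := T.level_vertex w n hnw
      have hdl := T.down_le w n h0n hnw
      have hdh := T.h_down w n h0n hnw
      have hzv : T.le z (T.down w n) := T.le_of_h_le hw2 hdl (by rw [hdh]; exact hzn)
      have hmem : T.down w n ∈ T.V z n := ⟨hvtx, hzv, hdh⟩
      rw [Finset.coe_biUnion]
      refine Set.mem_biUnion (show T.down w n ∈ (s : Set T.X) by
        rw [hsdef, Set.Finite.coe_toFinset]; exact hmem) ?_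
      rw [hfdef]
      simp only [dif_pos hvtx, Set.Finite.coe_toFinset]
      exact ⟨hw1, hdl, by rw [hw3', hdh]⟩
    have hcards : ∀ a ∈ s, (f a).card ≤ K := by
      intro a ha
      rw [hsdef, Set.Finite.mem_toFinset] at ha
      rw [hfdef]
      simp only [dif_pos ha.1]
      have hcc := T.chil_card ha.1
      rwa [Set.ncard_eq_toFinset_card _ (T.chil_finite ha.1)] at hcc
    have hbu : (s.biUnion f).card ≤ s.card * K :=
      Finset.card_biUnion_le_card_mul s f K hcards
    have hscard : s.card = (T.V z n).ncard := (Set.ncard_eq_toFinset_card _ hfin).symm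
    refine ⟨Set.Finite.subset (Finset.finite_toSet _) hsub, ?_⟩
    calc (T.V z (⌈T.h z⌉₊ + (k + 1))).ncard ≤ (↑(s.biUnion f) : Set T.X).ncard :=
          Set.ncard_le_ncard hsub (s.biUnion f).finite_toSet
      _ = (s.biUnion f).card := Set.ncard_coe_finset _
      _ ≤ s.card * K := hbu
      _ = (T.V z n).ncard * K := by rw [hscard]
      _ ≤ K ^ (k + 1) * K := Nat.mul_le_mul_right K hcard
      _ = K ^ (k + 1 + 1) := by ring

lemma integral_exp_neg_mul {β : ℝ} (hβ : 0 < β) (a b : ℝ) :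
    ∫ t in a..b, Real.exp (-β * t) = (Real.exp (-β * a) - Real.exp (-β * b)) / β := by
  have hβ' : β ≠ 0 := ne_of_gt hβ
  have hd : ∀ t : ℝ, HasDerivAt (fun t => Real.exp (-β * t) / (-β)) (Real.exp (-β * t)) t := by
    intro t
    have h1 : HasDerivAt (fun t : ℝ => -β * t) (-β) t := by
      simpa using (hasDerivAt_id t).const_mul (-β)
    have h3 := (h1.exp).div_const (-β)
    rw [mul_div_cancel_right₀ _ (neg_ne_zero.mpr hβ')] at h3
    exact h3
  have hi : IntervalIntegrable (fun t => Real.exp (-β * t)) MeasureTheory.volume a b :=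
    (Real.continuous_exp.comp (continuous_const.mul continuous_id)).intervalIntegrable a b
  rw [intervalIntegral.integral_eq_sub_of_hasDerivAt (fun t _ => hd t) hi]
  rw [div_neg, div_neg]
  ring

lemma measure_desc_le (T : UnifTree K ε β) (hβ0 : 0 < β)
    (hq : (K : ℝ) * Real.exp (-β) < 1) (z : T.X) :
    T.μ {y | T.le z y} ≤
      ENNReal.ofReal ((K : ℝ) ^ 2 * (1 - Real.exp (-β)) / β * (1 - (K : ℝ) * Real.exp (-β))⁻¹ *
        Real.exp (-β * T.h z)) := by
  classical
  have hu0 : 0 ≤ T.h z := T.h_nonneg z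
  set u := T.h z with hu
  set n0 := ⌈u⌉₊ with hn0
  have hun0 : u ≤ (n0 : ℝ) := Nat.le_ceil u
  set q : ℝ := (K : ℝ) * Real.exp (-β) with hqdef
  have hq0 : 0 ≤ q := by positivity
  set c : ℝ := (K : ℝ) ^ 2 * (1 - Real.exp (-β)) / β * Real.exp (-β * u) with hcdef
  have hc0 : 0 ≤ c := by
    have h1 : Real.exp (-β) ≤ 1 := Real.exp_le_one_iff.mpr (by linarith)
    have h2 : (0:ℝ) ≤ (K : ℝ) ^ 2 := by positivity
    have h3 : (0:ℝ) < Real.exp (-β * u) := Real.exp_pos _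
    have h4 : (0:ℝ) ≤ (1 - Real.exp (-β)) := by linarith
    positivity
  -- the slab covering
  have hcov : {y | T.le z y} ⊆
      ⋃ n : ℕ, ⋃ v ∈ T.V z (n0 + (n + 1)),
        {p | T.le p v ∧ u + n ≤ T.h p ∧ T.h p ≤ u + n + 1} := by
    intro y hy
    have hyz : u ≤ T.h y := T.h_mono z y hy
    set n := ⌊T.h y - u⌋₊ with hn
    have h1 : (n : ℝ) ≤ T.h y - u := Nat.floor_le (by linarith)
    have h2 : T.h y - u < n + 1 := Nat.lt_floor_add_one _
    have h3 : T.h y ≤ ((n0 + (n + 1) : ℕ) : ℝ) := by push_cast; linarith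
    obtain ⟨v, hv1, hv2, hv3⟩ := T.exists_vertex_above y (n0 + (n + 1)) h3
    have hvV : v ∈ T.V z (n0 + (n + 1)) := ⟨hv1, T.le_trans z y v hy hv2, hv3⟩
    exact Set.mem_iUnion.mpr ⟨n, Set.mem_biUnion hvV ⟨hv2, by linarith, by linarith⟩⟩
  refine _root_.le_trans (measure_mono hcov) (_root_.le_trans (measure_iUnion_le _) ?_)
  have hterm : ∀ n : ℕ,
      T.μ (⋃ v ∈ T.V z (n0 + (n + 1)),
          {p | T.le p v ∧ u + n ≤ T.h p ∧ T.h p ≤ u + n + 1}) ≤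
        ENNReal.ofReal (c * q ^ n) := by
    intro n
    obtain ⟨hfin, hcard⟩ := T.V_card z (n + 1)
    rw [← hn0] at hfin hcard
    set s : Finset T.X := hfin.toFinset with hsdef
    have hE : (⋃ v ∈ T.V z (n0 + (n + 1)),
        {p | T.le p v ∧ u + n ≤ T.h p ∧ T.h p ≤ u + n + 1}) =
        ⋃ v ∈ s, {p | T.le p v ∧ u + n ≤ T.h p ∧ T.h p ≤ u + n + 1} := by
      rw [hsdef]
      ext v
      simp [Set.Finite.mem_toFinset]
    rw [hE]
    refine _root_.le_trans (measure_biUnion_finset_le s _) ?_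
    have hseg : ∀ v ∈ s,
        T.μ {p | T.le p v ∧ u + n ≤ T.h p ∧ T.h p ≤ u + n + 1} ≤
          ENNReal.ofReal ((Real.exp (-β * (u + n)) - Real.exp (-β * (u + n + 1))) / β) := by
      intro v hv
      rw [hsdef, Set.Finite.mem_toFinset] at hv
      obtain ⟨hv1, hv2, hv3⟩ := hv
      have hb : u + n + 1 ≤ T.h v := by rw [hv3]; push_cast; linarith
      have h0 : (0:ℝ) ≤ u + n := by positivity
      have hab : u + n ≤ u + n + 1 := by linarith
      rw [T.μ_seg v (u + n) (u + n + 1) h0 hab hb, integral_exp_neg_mul hβ0]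
    refine _root_.le_trans (Finset.sum_le_card_nsmul s _ _ hseg) ?_
    have hscard : s.card = (T.V z (n0 + (n + 1))).ncard :=
      (Set.ncard_eq_toFinset_card _ hfin).symm
    have hcard2 : s.card ≤ K ^ (n + 2) := by rw [hscard]; exact hcard
    have hnn : (0:ℝ) ≤ (Real.exp (-β * (u + n)) - Real.exp (-β * (u + n + 1))) / β := by
      have : Real.exp (-β * (u + n + 1)) ≤ Real.exp (-β * (u + n)) :=
        Real.exp_le_exp.mpr (by nlinarith)
      exact div_nonneg (by linarith) (le_of_lt hβ0)
    calc s.card • ENNReal.ofReal ((Real.exp (-β * (u + n)) - Real.exp (-β * (u + n + 1))) / β)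
        ≤ (K ^ (n + 2)) • ENNReal.ofReal
            ((Real.exp (-β * (u + n)) - Real.exp (-β * (u + n + 1))) / β) := by
          exact nsmul_le_nsmul_left (by positivity) hcard2
      _ = ENNReal.ofReal ((K:ℝ) ^ (n + 2) *
            ((Real.exp (-β * (u + n)) - Real.exp (-β * (u + n + 1))) / β)) := by
          rw [nsmul_eq_mul, ← ENNReal.ofReal_natCast (K ^ (n + 2)),
            ← ENNReal.ofReal_mul (by positivity)]
          push_cast
          ring_nf
      _ = ENNReal.ofReal (c * q ^ n) := by
          congr 1
          have e1 : Real.exp (-β * (u + (n:ℝ))) = Real.exp (-β * u) * Real.exp (-β) ^ n := by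
            rw [show -β * (u + (n:ℝ)) = -β * u + (n:ℝ) * (-β) by ring, Real.exp_add,
              Real.exp_nat_mul]
          have e2 : Real.exp (-β * (u + (n:ℝ) + 1)) =
              Real.exp (-β * u) * Real.exp (-β) ^ n * Real.exp (-β) := by
            rw [show -β * (u + (n:ℝ) + 1) = (-β * u + (n:ℝ) * (-β)) + (-β) by ring,
              Real.exp_add, Real.exp_add, Real.exp_nat_mul]
          rw [e1, e2, hcdef, hqdef, mul_pow]
          field_simp
          ring
  refine _root_.le_trans (ENNReal.tsum_le_tsum hterm) ?_
  have hsum : Summable (fun n : ℕ => c * q ^ n) :=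
    (summable_geometric_of_lt_one hq0 hq).mul_left c
  have hnn : ∀ n : ℕ, 0 ≤ c * q ^ n := fun n => mul_nonneg hc0 (pow_nonneg hq0 n)
  rw [← ENNReal.ofReal_tsum_of_nonneg hnn hsum]
  apply ENNReal.ofReal_le_ofReal
  rw [tsum_mul_left, tsum_geometric_of_lt_one hq0 hq]
  apply le_of_eq
  rw [hcdef]
  ring

end UnifTree


end Aux


set_option maxHeartbeats 2000000 in
/-- for a rooted tree whose vertices have at least one and at most K
children, with the uniformizing metric of parameter ε > 0 and the measure of parameter
β > log K, the balls of intermediate radii `e^{-ε|x|}/ε ≤ r ≤ (1 - e^{-ε|x|})/ε` satisfy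
`μ(B(x,r)) ≃ r^{β/ε}`, with comparison constants depending only on K, ε, β. -/
theorem statement1 (K : ℕ) (ε β : ℝ) (hε : 0 < ε) (hβ : Real.log K < β) :
    ∃ C : ℝ, 0 < C ∧ ∀ (T : UnifTree K ε β) (x : T.X) (r : ℝ),
      Real.exp (-ε * T.h x) / ε ≤ r → r ≤ (1 - Real.exp (-ε * T.h x)) / ε →
        ENNReal.ofReal (C⁻¹ * r ^ (β / ε)) ≤ T.μ (T.ball x r) ∧
          T.μ (T.ball x r) ≤ ENNReal.ofReal (C * r ^ (β / ε)) := by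
  classical
  have hβ0 : 0 < β := lt_of_le_of_lt (Real.log_natCast_nonneg K) hβ
  have hq1 : (K : ℝ) * Real.exp (-β) < 1 := by
    rcases Nat.eq_zero_or_pos K with hK0 | hKpos
    · rw [hK0]; simp
    · have hKR : (0:ℝ) < K := by exact_mod_cast hKpos
      rw [← Real.exp_log hKR, ← Real.exp_add]
      exact Real.exp_lt_one_iff.mpr (by linarith)
  set eb := Real.exp (-β) with hebdef
  have heb1 : eb < 1 := Real.exp_lt_one_iff.mpr (by linarith)
  have heb0 : 0 < eb := Real.exp_pos _
  set cl : ℝ := (1 - eb) / β * (ε / 2) ^ (β / ε) with hcl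
  have hclp : (0:ℝ) < (ε / 2) ^ (β / ε) := Real.rpow_pos_of_pos (by linarith) _
  have hcl0 : 0 < cl := by
    have h1 : 0 < 1 - eb := by linarith
    positivity
  set cu : ℝ := (K:ℝ) ^ 2 * (1 - eb) / β * (1 - (K:ℝ) * eb)⁻¹ * (2 * ε) ^ (β / ε) with hcu
  refine ⟨max cl⁻¹ (cu + 1), lt_of_lt_of_le (by positivity) (le_max_left _ _), ?_⟩
  intro T x r hr1 hr2
  set C := max cl⁻¹ (cu + 1) with hCdef
  have hC0 : 0 < C := lt_of_lt_of_le (by positivity) (le_max_left _ _)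
  have hCcl : C⁻¹ ≤ cl := by
    have h1 : cl⁻¹ ≤ C := le_max_left _ _
    calc C⁻¹ ≤ (cl⁻¹)⁻¹ := by
          apply inv_anti₀ (by positivity) h1
      _ = cl := inv_inv cl
  have hhx : 0 ≤ T.h x := T.h_nonneg x
  have hex0 : 0 < Real.exp (-ε * T.h x) := Real.exp_pos _
  have hr0 : 0 < r := lt_of_lt_of_le (by positivity) hr1
  have hrp : (0:ℝ) ≤ r ^ (β / ε) := le_of_lt (Real.rpow_pos_of_pos hr0 _)
  have hεhx : Real.exp (-ε * T.h x) ≤ ε * r := by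
    rw [mul_comm ε r]; exact (div_le_iff₀ hε).mp hr1
  have hεr1 : ε * r < 1 := by
    have h := (le_div_iff₀ hε).mp hr2
    rw [mul_comm r ε] at h
    linarith [hex0]
  constructor
  · -- lower bound
    set t : ℝ := -Real.log (ε * r / 2) / ε with htdef
    have hεr2 : (0:ℝ) < ε * r / 2 := by positivity
    have het : Real.exp (-ε * t) = ε * r / 2 := by
      rw [show -ε * t = Real.log (ε * r / 2) by rw [htdef]; field_simp]
      exact Real.exp_log hεr2
    have ht0 : 0 ≤ t := by
      have hlog : Real.log (ε * r / 2) < 0 := Real.log_neg hεr2 (by linarith)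
      rw [htdef]
      exact div_nonneg (neg_nonneg.mpr (le_of_lt hlog)) (le_of_lt hε)
    set u := min t (T.h x) with hudef
    have hu0 : 0 ≤ u := le_min ht0 hhx
    have huhx : u ≤ T.h x := min_le_right _ _
    have hhu : T.h (T.down x u) = u := T.h_down x u hu0 huhx
    have hwx : T.le (T.down x u) x := T.down_le x u hu0 huhx
    have hkey : ∀ y, T.le (T.down x u) y → T.d x y < r := by
      intro y hy
      have hm1 : T.le (T.down x u) (T.meet x y) := T.meet_greatest x y _ hwx hy
      have hum : u ≤ T.h (T.meet x y) := by rw [← hhu]; exact T.h_mono _ _ hm1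
      have key2 : 2 * Real.exp (-ε * T.h (T.meet x y)) ≤ ε * r + Real.exp (-ε * T.h x) := by
        rcases le_total t (T.h x) with hc | hc
        · have hut : u = t := min_eq_left hc
          have h6 : t ≤ T.h (T.meet x y) := hut ▸ hum
          have h5 : Real.exp (-ε * T.h (T.meet x y)) ≤ ε * r / 2 := by
            rw [← het]
            exact Real.exp_le_exp.mpr (neg_mul_mono (le_of_lt hε) h6)
          linarith [hex0]
        · have hux : u = T.h x := min_eq_right hc
          have h6 : T.h x ≤ T.h (T.meet x y) := hux ▸ hum
          have h5 : Real.exp (-ε * T.h (T.meet x y)) ≤ Real.exp (-ε * T.h x) :=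
            Real.exp_le_exp.mpr (neg_mul_mono (le_of_lt hε) h6)
          linarith [hεhx]
      have hdz : T.d x y = (2 * Real.exp (-ε * T.h (T.meet x y)) - Real.exp (-ε * T.h x)
          - Real.exp (-ε * T.h y)) / ε := by
        simp only [UnifTree.d]; ring
      rw [hdz, div_lt_iff₀ hε, mul_comm r ε]
      linarith [Real.exp_pos (-ε * T.h y), key2]
    set n : ℕ := ⌈T.h x⌉₊ + 1 with hndef
    have hxn : T.h x ≤ (n : ℝ) := by
      have := Nat.le_ceil (T.h x)
      push_cast [hndef]
      linarith
    obtain ⟨v', hv1, hv2, hv3⟩ := T.exists_vertex_above x n hxn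
    have hsub : {p | T.le p v' ∧ u ≤ T.h p ∧ T.h p ≤ (n:ℝ)} ⊆ T.ball x r := by
      rintro p ⟨hp1, hp2, hp3⟩
      exact hkey p (T.le_of_h_le (T.le_trans _ x v' hwx hv2) hp1 (by rw [hhu]; exact hp2))
    have hμS := T.μ_seg v' u (n:ℝ) hu0 (by linarith) (by rw [hv3])
    have hun1 : u + 1 ≤ (n:ℝ) := by
      have := Nat.le_ceil (T.h x)
      push_cast [hndef]
      linarith
    have hreal : C⁻¹ * r ^ (β / ε) ≤ (Real.exp (-β * u) - Real.exp (-β * (n:ℝ))) / β := by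
      have h1 : Real.exp (-β * (n:ℝ)) ≤ Real.exp (-β * u) * eb := by
        rw [hebdef, ← Real.exp_add,
          show -β * u + -β = -β * (u + 1) by ring]
        exact Real.exp_le_exp.mpr (neg_mul_mono (le_of_lt hβ0) hun1)
      have h2 : Real.exp (-β * t) = (ε * r / 2) ^ (β / ε) := by
        rw [Real.rpow_def_of_pos hεr2]
        congr 1
        rw [htdef]
        field_simp
      have h3 : Real.exp (-β * t) ≤ Real.exp (-β * u) :=
        Real.exp_le_exp.mpr (neg_mul_mono (le_of_lt hβ0) (min_le_left t (T.h x)))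
      have h4 : (ε * r / 2 : ℝ) ^ (β / ε) = (ε / 2) ^ (β / ε) * r ^ (β / ε) := by
        rw [← Real.mul_rpow (by positivity) (le_of_lt hr0)]
        congr 1
        ring
      have h5 : (ε / 2) ^ (β / ε) * r ^ (β / ε) ≤ Real.exp (-β * u) := by
        rw [← h4, ← h2]; exact h3
      have hb1 : (0:ℝ) ≤ (1 - eb) / β := div_nonneg (by linarith) (le_of_lt hβ0)
      calc C⁻¹ * r ^ (β / ε) ≤ cl * r ^ (β / ε) := mul_le_mul_of_nonneg_right hCcl hrp
        _ = (1 - eb) / β * ((ε / 2) ^ (β / ε) * r ^ (β / ε)) := by rw [hcl]; ring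
        _ ≤ (1 - eb) / β * Real.exp (-β * u) := mul_le_mul_of_nonneg_left h5 hb1
        _ ≤ (Real.exp (-β * u) - Real.exp (-β * (n:ℝ))) / β := by
            rw [div_mul_eq_mul_div, div_le_div_iff₀ hβ0 hβ0]
            have h9 : (1 - eb) * Real.exp (-β * u) ≤
                Real.exp (-β * u) - Real.exp (-β * (n:ℝ)) := by nlinarith [h1]
            nlinarith [h9, le_of_lt hβ0]
    calc ENNReal.ofReal (C⁻¹ * r ^ (β / ε))
        ≤ ENNReal.ofReal ((Real.exp (-β * u) - Real.exp (-β * (n:ℝ))) / β) :=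
          ENNReal.ofReal_le_ofReal hreal
      _ = T.μ {p | T.le p v' ∧ u ≤ T.h p ∧ T.h p ≤ (n:ℝ)} := by
          rw [hμS, UnifTree.integral_exp_neg_mul hβ0]
      _ ≤ T.μ (T.ball x r) := measure_mono hsub
  · -- upper bound
    set sp : ℝ := -Real.log (2 * (ε * r)) / ε with hspdef
    have h2er : (0:ℝ) < 2 * (ε * r) := by positivity
    have hes : Real.exp (-ε * sp) = 2 * (ε * r) := by
      rw [show -ε * sp = Real.log (2 * (ε * r)) by rw [hspdef]; field_simp]
      exact Real.exp_log h2er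
    set u2 := max sp 0 with hu2def
    have hu20 : 0 ≤ u2 := le_max_right _ _
    have hshx : sp < T.h x := by
      have h1 : Real.exp (-ε * T.h x) < Real.exp (-ε * sp) := by
        rw [hes]; linarith [hεhx, mul_pos hε hr0]
      exact lt_of_neg_mul_lt hε (Real.exp_lt_exp.mp h1)
    have hu2hx : u2 ≤ T.h x := max_le (le_of_lt hshx) hhx
    have hhz : T.h (T.down x u2) = u2 := T.h_down x u2 hu20 hu2hx
    have hball : T.ball x r ⊆ {y | T.le (T.down x u2) y} := by
      intro y hyd
      have hmx := T.meet_le_left x y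
      have hmy := T.meet_le_right x y
      have hEm : Real.exp (-ε * T.h (T.meet x y)) < 2 * (ε * r) := by
        have h2 : Real.exp (-ε * T.h y) ≤ Real.exp (-ε * T.h (T.meet x y)) :=
          Real.exp_le_exp.mpr (neg_mul_mono (le_of_lt hε) (T.h_mono _ _ hmy))
        have hyd' : T.d x y < r := hyd
        have hdz : T.d x y = (2 * Real.exp (-ε * T.h (T.meet x y)) - Real.exp (-ε * T.h x)
            - Real.exp (-ε * T.h y)) / ε := by
          simp only [UnifTree.d]; ring
        rw [hdz, div_lt_iff₀ hε, mul_comm r ε] at hyd'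
        linarith [hεhx, h2]
      have hsm : sp < T.h (T.meet x y) := by
        have h1 : Real.exp (-ε * T.h (T.meet x y)) < Real.exp (-ε * sp) := by
          rw [hes]; exact hEm
        exact lt_of_neg_mul_lt hε (Real.exp_lt_exp.mp h1)
      have hu2m : u2 ≤ T.h (T.meet x y) := max_le (le_of_lt hsm) (T.h_nonneg _)
      exact T.le_trans _ _ _
        (T.le_of_h_le (T.down_le x u2 hu20 hu2hx) hmx (by rw [hhz]; exact hu2m)) hmy
    refine _root_.le_trans (measure_mono hball)
      (_root_.le_trans (T.measure_desc_le hβ0 hq1 _) ?_)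
    apply ENNReal.ofReal_le_ofReal
    rw [hhz]
    have hes2 : Real.exp (-β * sp) = (2 * (ε * r)) ^ (β / ε) := by
      rw [Real.rpow_def_of_pos h2er]
      congr 1
      rw [hspdef]
      field_simp
    have h6 : Real.exp (-β * u2) ≤ (2 * (ε * r)) ^ (β / ε) := by
      rw [← hes2]
      exact Real.exp_le_exp.mpr (neg_mul_mono (le_of_lt hβ0) (le_max_left sp 0))
    have h7 : ((2 * (ε * r)) : ℝ) ^ (β / ε) = (2 * ε) ^ (β / ε) * r ^ (β / ε) := by
      rw [← Real.mul_rpow (by positivity) (le_of_lt hr0)]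
      congr 1
      ring
    have hq2 : (0:ℝ) < 1 - (K:ℝ) * eb := by linarith [hq1]
    have hcc0 : (0:ℝ) ≤ (K:ℝ) ^ 2 * (1 - eb) / β * (1 - (K:ℝ) * eb)⁻¹ := by
      have h8 : (0:ℝ) ≤ 1 - eb := by linarith
      positivity
    calc (K:ℝ) ^ 2 * (1 - eb) / β * (1 - (K:ℝ) * eb)⁻¹ * Real.exp (-β * u2)
        ≤ (K:ℝ) ^ 2 * (1 - eb) / β * (1 - (K:ℝ) * eb)⁻¹ *
            ((2 * ε) ^ (β / ε) * r ^ (β / ε)) := by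
          refine mul_le_mul_of_nonneg_left ?_ hcc0
          rw [← h7]
          exact h6
      _ = cu * r ^ (β / ε) := by rw [hcu]; ring
      _ ≤ C * r ^ (β / ε) := by
          refine mul_le_mul_of_nonneg_right ?_ hrp
          calc cu ≤ cu + 1 := by linarith
            _ ≤ C := le_max_right _ _
end

section
/- Let X and Y be rooted trees in which every vertex has at least two children, equipped with uniformizing metrics with parameters ε_X > 0 and ε_Y > 0 respectively, extended to the boundaries ∂X and ∂Y. Suppose f : ∂X → ∂Y is an η-quasisymmetric map, where η(t) = A t^{α₁} for t ≤ 1 and η(t) = A t^{α₂} for t ≥ 1, with α₁, α₂, A > 0. Then there is a rough quasiisometry F : X → Y (between vertex sets, with graph distances) which extends continuously along geodesics in X to f, such that for all vertices x₁, x₂ ∈ X, L₁|x₁-x₂| - Λ ≤ |F(x₁)-F(x₂)| ≤ L₂|x₁-x₂| + Λ, where L₁ = α₁ε_X/ε_Y, L₂ = α₂ε_X/ε_Y and Λ = (2 log A)/ε_Y; moreover F is an (L,Λ)-rough quasiisometry with L = max{1/L₁, L₂}: every vertex of Y lies within graph distance L + Λ of the image F(X). -/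
open Set
open scoped Classical

/-- A rooted tree, described combinatorially by its vertex set, its root, the parent
function and the depth (graph distance to the root). -/
structure VTree where
  V : Type
  root : V
  parent : V → V
  depth : V → ℕ
  parent_root : parent root = root
  depth_root : depth root = 0
  depth_parent : ∀ v, v ≠ root → depth v = depth (parent v) + 1
  parent_iter_root : ∀ v, parent^[depth v] v = root

namespace VTree

/-- The ancestor of `v` at depth `n` (for `n ≤ depth v`). -/
def anc (T : VTree) (v : T.V) (n : ℕ) : T.V := T.parent^[T.depth v - n] v

/-- The depth of the largest common ancestor of `x` and `y`. -/
noncomputable def meetDepth (T : VTree) (x y : T.V) : ℕ :=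
  sSup {n | n ≤ min (T.depth x) (T.depth y) ∧ T.anc x n = T.anc y n}

/-- The graph distance between two vertices: the number of edges in the geodesic. -/
noncomputable def vdist (T : VTree) (x y : T.V) : ℕ :=
  (T.depth x - T.meetDepth x y) + (T.depth y - T.meetDepth x y)

/-- Every vertex has at least two children. -/
def TwoChildren (T : VTree) : Prop :=
  ∀ v : T.V, ∃ w₁ w₂ : T.V, w₁ ≠ w₂ ∧ w₁ ≠ T.root ∧ w₂ ≠ T.root ∧
    T.parent w₁ = v ∧ T.parent w₂ = v

/-- A point of the boundary ∂X: an infinite geodesic ray from the root. -/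
def Ray (T : VTree) : Type :=
  {ζ : ℕ → T.V // ζ 0 = T.root ∧ ∀ n, T.parent (ζ (n + 1)) = ζ n ∧ ζ (n + 1) ≠ T.root}

/-- The visual metric on the boundary with parameter ε:
`d(ζ,ξ) = (2/ε) e^{-εk}` where `k` is the graph distance from the root to the geodesic
`[ζ,ξ]` (the length of the common prefix of the two rays). -/
noncomputable def rdist (T : VTree) (ε : ℝ) (ζ ξ : T.Ray) : ℝ :=
  if ζ = ξ then 0
  else (2 / ε) * Real.exp (-ε * (sSup {n : ℕ | ∀ m ≤ n, ζ.1 m = ξ.1 m} : ℕ))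

end VTree

/-- The control function `η(t) = A t^{α₁}` for `t ≤ 1`, `η(t) = A t^{α₂}` for `t ≥ 1`. -/
noncomputable def eta (A α₁ α₂ t : ℝ) : ℝ :=
  if t ≤ 1 then A * t ^ α₁ else A * t ^ α₂


namespace VTree

variable (T : VTree)

lemma root_of_depth_eq_zero {v : T.V} (h : T.depth v = 0) : v = T.root := by
  by_contra hv
  have := T.depth_parent v hv
  omega

lemma ray_depth (ζ : T.Ray) : ∀ n, T.depth (ζ.1 n) = n := by
  intro n
  induction n with
  | zero => rw [ζ.2.1, T.depth_root]
  | succ n ih =>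
    have h := ζ.2.2 n
    rw [T.depth_parent _ h.2, h.1, ih]

lemma ray_parent_iter (ζ : T.Ray) (m i : ℕ) : T.parent^[i] (ζ.1 (m + i)) = ζ.1 m := by
  induction i with
  | zero => rfl
  | succ i ih =>
    rw [Function.iterate_succ_apply, show m + (i+1) = (m+i)+1 from rfl, (ζ.2.2 (m+i)).1, ih]

end VTree

namespace VTree

variable (T : VTree)

lemma ray_anc (ζ : T.Ray) {m n : ℕ} (h : m ≤ n) : T.anc (ζ.1 n) m = ζ.1 m := by
  unfold anc
  rw [T.ray_depth ζ n, show ζ.1 n = ζ.1 (m + (n - m)) by rw [Nat.add_sub_cancel' h]]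
  exact T.ray_parent_iter ζ m (n - m)

lemma ray_agree_mono (ζ ξ : T.Ray) {m n : ℕ} (h : m ≤ n) (hn : ζ.1 n = ξ.1 n) :
    ζ.1 m = ξ.1 m := by
  rw [← T.ray_anc ζ h, ← T.ray_anc ξ h, hn]

/-- the common-prefix length (Gromov product at the root) of two distinct rays -/
noncomputable def aR (ζ ξ : T.Ray) : ℕ := sSup {n : ℕ | ∀ m ≤ n, ζ.1 m = ξ.1 m}

lemma aR_comm (ζ ξ : T.Ray) : T.aR ζ ξ = T.aR ξ ζ := by
  unfold aR
  congr 1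
  ext n
  exact ⟨fun h m hm => (h m hm).symm, fun h m hm => (h m hm).symm⟩

lemma aSet_eq (ζ ξ : T.Ray) :
    {n : ℕ | ∀ m ≤ n, ζ.1 m = ξ.1 m} = {n : ℕ | ζ.1 n = ξ.1 n} := by
  ext n
  constructor
  · exact fun h => h n le_rfl
  · exact fun h m hm => T.ray_agree_mono ζ ξ hm h

lemma exists_ray_ne {ζ ξ : T.Ray} (h : ζ ≠ ξ) : ∃ n, ζ.1 n ≠ ξ.1 n := by
  by_contra hc
  push_neg at hc
  exact h (Subtype.ext (funext hc))

lemma aR_spec {ζ ξ : T.Ray} (h : ζ ≠ ξ) :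
    (∀ m ≤ T.aR ζ ξ, ζ.1 m = ξ.1 m) ∧ ζ.1 (T.aR ζ ξ + 1) ≠ ξ.1 (T.aR ζ ξ + 1) := by
  obtain ⟨N, hN⟩ := T.exists_ray_ne h
  have hbdd : BddAbove {n : ℕ | ζ.1 n = ξ.1 n} := by
    refine ⟨N, fun n hn => ?_⟩
    by_contra hc
    exact hN (T.ray_agree_mono ζ ξ (by omega) hn)
  have hne : {n : ℕ | ζ.1 n = ξ.1 n}.Nonempty := ⟨0, show ζ.1 0 = ξ.1 0 by rw [ζ.2.1, ξ.2.1]⟩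
  unfold aR
  rw [aSet_eq]
  have hmem := Nat.sSup_mem hne hbdd
  constructor
  · exact fun m hm => T.ray_agree_mono ζ ξ hm hmem
  · intro hc
    have := le_csSup hbdd (show _ ∈ {n : ℕ | ζ.1 n = ξ.1 n} from hc)
    omega

lemma le_aR {ζ ξ : T.Ray} (h : ζ ≠ ξ) {n : ℕ} (hn : ζ.1 n = ξ.1 n) : n ≤ T.aR ζ ξ := by
  by_contra hc
  exact (T.aR_spec h).2 (T.ray_agree_mono ζ ξ (by omega) hn)

lemma rdist_eq {ζ ξ : T.Ray} (ε : ℝ) (h : ζ ≠ ξ) :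
    T.rdist ε ζ ξ = (2 / ε) * Real.exp (-ε * (T.aR ζ ξ : ℕ)) := by
  unfold rdist aR
  rw [if_neg h]

lemma rdist_pos {ζ ξ : T.Ray} {ε : ℝ} (hε : 0 < ε) (h : ζ ≠ ξ) : 0 < T.rdist ε ζ ξ := by
  rw [T.rdist_eq ε h]
  positivity

lemma meetDepth_ray (ζ ξ : T.Ray) (n₁ n₂ : ℕ) (h : ζ ≠ ξ) :
    T.meetDepth (ζ.1 n₁) (ξ.1 n₂) = min (min n₁ n₂) (T.aR ζ ξ) := by
  unfold meetDepth
  have hset : {n | n ≤ min (T.depth (ζ.1 n₁)) (T.depth (ξ.1 n₂)) ∧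
      T.anc (ζ.1 n₁) n = T.anc (ξ.1 n₂) n} = Set.Iic (min (min n₁ n₂) (T.aR ζ ξ)) := by
    ext n
    simp only [Set.mem_setOf_eq, Set.mem_Iic, T.ray_depth, le_min_iff]
    constructor
    · rintro ⟨⟨h1, h2⟩, heq⟩
      rw [T.ray_anc ζ h1, T.ray_anc ξ h2] at heq
      exact ⟨⟨h1, h2⟩, T.le_aR h heq⟩
    · rintro ⟨⟨h1, h2⟩, ha⟩
      rw [T.ray_anc ζ h1, T.ray_anc ξ h2]
      exact ⟨⟨h1, h2⟩, (T.aR_spec h).1 n ha⟩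
  rw [hset, csSup_Iic]

lemma meetDepth_ray_self (ζ : T.Ray) (n₁ n₂ : ℕ) :
    T.meetDepth (ζ.1 n₁) (ζ.1 n₂) = min n₁ n₂ := by
  unfold meetDepth
  have hset : {n | n ≤ min (T.depth (ζ.1 n₁)) (T.depth (ζ.1 n₂)) ∧
      T.anc (ζ.1 n₁) n = T.anc (ζ.1 n₂) n} = Set.Iic (min n₁ n₂) := by
    ext n
    simp only [Set.mem_setOf_eq, Set.mem_Iic, T.ray_depth, le_min_iff]
    constructor
    · rintro ⟨⟨h1, h2⟩, _⟩
      exact ⟨h1, h2⟩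
    · rintro ⟨h1, h2⟩
      rw [T.ray_anc ζ h1, T.ray_anc ζ h2]
      exact ⟨⟨h1, h2⟩, rfl⟩
  rw [hset, csSup_Iic]

lemma vdist_ray (ζ ξ : T.Ray) (n₁ n₂ : ℕ) (h : ζ ≠ ξ) :
    (T.vdist (ζ.1 n₁) (ξ.1 n₂) : ℝ) =
      (n₁ : ℝ) + n₂ - 2 * min (min (n₁:ℝ) n₂) (T.aR ζ ξ) := by
  unfold vdist
  rw [T.meetDepth_ray ζ ξ n₁ n₂ h, T.ray_depth, T.ray_depth]
  have h1 : min (min n₁ n₂) (T.aR ζ ξ) ≤ n₁ := by omega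
  have h2 : min (min n₁ n₂) (T.aR ζ ξ) ≤ n₂ := by omega
  have : ((min (min n₁ n₂) (T.aR ζ ξ) : ℕ) : ℝ) = min (min (n₁:ℝ) n₂) (T.aR ζ ξ) := by
    push_cast
    rfl
  push_cast [Nat.cast_sub h1, Nat.cast_sub h2]
  rw [← this]
  push_cast
  ring

lemma vdist_ray_self (ζ : T.Ray) (n₁ n₂ : ℕ) :
    (T.vdist (ζ.1 n₁) (ζ.1 n₂) : ℝ) = |(n₁ : ℝ) - n₂| := by
  unfold vdist
  rw [T.meetDepth_ray_self ζ n₁ n₂, T.ray_depth, T.ray_depth]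
  rcases le_total n₁ n₂ with h | h
  · rw [min_eq_left h, Nat.sub_self, abs_sub_comm,
      abs_of_nonneg (sub_nonneg.2 ((Nat.cast_le (α := ℝ)).2 h))]
    push_cast [Nat.cast_sub h]
    ring
  · rw [min_eq_right h, Nat.sub_self,
      abs_of_nonneg (sub_nonneg.2 ((Nat.cast_le (α := ℝ)).2 h))]
    push_cast [Nat.cast_sub h]
    ring

end VTree

namespace VTree

variable (T : VTree)

lemma aR_eq_of {ζ ξ : T.Ray} (h : ζ ≠ ξ) {K : ℕ} (hag : ζ.1 K = ξ.1 K)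
    (hne : ζ.1 (K+1) ≠ ξ.1 (K+1)) : T.aR ζ ξ = K := by
  have h1 := T.le_aR h hag
  have h2 := (T.aR_spec h).1
  by_contra hc
  exact hne (h2 (K+1) (by omega))

lemma depth_parent_iter {v : T.V} : ∀ i, i ≤ T.depth v →
    T.depth (T.parent^[i] v) = T.depth v - i := by
  intro i
  induction i with
  | zero => simp
  | succ i ih =>
    intro hi
    have hih := ih (by omega)
    have hne : T.parent^[i] v ≠ T.root := by
      intro hc
      rw [hc, T.depth_root] at hih
      omega
    have := T.depth_parent _ hne
    rw [Function.iterate_succ_apply']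
    omega

lemma depth_anc {v : T.V} {n : ℕ} (h : n ≤ T.depth v) : T.depth (T.anc v n) = n := by
  unfold anc
  rw [T.depth_parent_iter _ (by omega)]
  omega

lemma anc_self (v : T.V) : T.anc v (T.depth v) = v := by
  unfold anc
  rw [Nat.sub_self]
  rfl

lemma anc_zero (v : T.V) : T.anc v 0 = T.root := by
  unfold anc
  rw [Nat.sub_zero]
  exact T.parent_iter_root v

lemma parent_anc {v : T.V} {n : ℕ} (h : n + 1 ≤ T.depth v) :
    T.parent (T.anc v (n+1)) = T.anc v n := by
  unfold anc
  rw [show T.depth v - n = (T.depth v - (n+1)) + 1 by omega, Function.iterate_succ_apply']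

lemma anc_ne_root {v : T.V} {n : ℕ} (h1 : 1 ≤ n) (h2 : n ≤ T.depth v) :
    T.anc v n ≠ T.root := by
  intro hc
  have := T.depth_anc h2
  rw [hc, T.depth_root] at this
  omega

section Children

variable (hX : T.TwoChildren)

noncomputable def c1 : T.V → T.V := fun v => (hX v).choose

noncomputable def c2 : T.V → T.V := fun v => (hX v).choose_spec.choose

lemma c_spec (v : T.V) : T.c1 hX v ≠ T.c2 hX v ∧ T.c1 hX v ≠ T.root ∧
    T.c2 hX v ≠ T.root ∧ T.parent (T.c1 hX v) = v ∧ T.parent (T.c2 hX v) = v :=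
  (hX v).choose_spec.choose_spec

lemma depth_c1 (v : T.V) : T.depth (T.c1 hX v) = T.depth v + 1 := by
  rw [T.depth_parent _ (T.c_spec hX v).2.1, (T.c_spec hX v).2.2.2.1]

lemma depth_c2 (v : T.V) : T.depth (T.c2 hX v) = T.depth v + 1 := by
  rw [T.depth_parent _ (T.c_spec hX v).2.2.1, (T.c_spec hX v).2.2.2.2]

/-- the ray through `v` obtained by following ancestors up and iterating `c1` down -/
noncomputable def rho (v : T.V) : T.Ray := by
  refine ⟨fun n => if n ≤ T.depth v then T.anc v n else (T.c1 hX)^[n - T.depth v] v, ?_, ?_⟩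
  · dsimp only
    rw [if_pos (Nat.zero_le _), T.anc_zero]
  · intro n
    dsimp only
    by_cases hn : n + 1 ≤ T.depth v
    · rw [if_pos hn, if_pos (by omega)]
      exact ⟨T.parent_anc hn, T.anc_ne_root (by omega) hn⟩
    · rw [if_neg hn, show n + 1 - T.depth v = (n - T.depth v) + 1 by omega,
        Function.iterate_succ_apply']
      refine ⟨?_, (T.c_spec hX _).2.1⟩
      rw [(T.c_spec hX _).2.2.2.1]
      by_cases hn' : n ≤ T.depth v
      · have hEq : n = T.depth v := by omega
        subst hEq
        simp [T.anc_self]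
      · rw [if_neg hn']

lemma rho_at {v : T.V} {n : ℕ} (h : n ≤ T.depth v) : (T.rho hX v).1 n = T.anc v n := by
  unfold rho
  simp only [if_pos h]

lemma rho_self (v : T.V) : (T.rho hX v).1 (T.depth v) = v := by
  rw [T.rho_at hX le_rfl, T.anc_self]

end Children

end VTree

section Key

variable {εX εY α₁ α₂ A : ℝ} {X Y : VTree} {f : X.Ray → Y.Ray}

lemma eta_exp (hA : 0 < A) (u α₁ α₂ : ℝ) :
    eta A α₁ α₂ (Real.exp u) = A * Real.exp ((if u ≤ 0 then α₁ else α₂) * u) := by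
  unfold eta
  by_cases h : u ≤ 0
  · rw [if_pos (Real.exp_le_one_iff.2 h), if_pos h,
      Real.rpow_def_of_pos (Real.exp_pos u), Real.log_exp, mul_comm u]
  · rw [if_neg (by rw [Real.exp_le_one_iff]; exact h), if_neg h,
      Real.rpow_def_of_pos (Real.exp_pos u), Real.log_exp, mul_comm u]

lemma key_main (hεX : 0 < εX) (hεY : 0 < εY) (hA : 0 < A)
    (hinj : Function.Injective f)
    (hqs : ∀ ζ ξ χ : X.Ray, ζ ≠ χ →
      Y.rdist εY (f ζ) (f ξ) ≤
        eta A α₁ α₂ (X.rdist εX ζ ξ / X.rdist εX ζ χ) * Y.rdist εY (f ζ) (f χ))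
    {ζ ξ χ : X.Ray} (hζξ : ζ ≠ ξ) (hζχ : ζ ≠ χ) :
    (if X.aR ζ χ ≤ X.aR ζ ξ then α₁ else α₂) * εX / εY * ((X.aR ζ ξ : ℝ) - X.aR ζ χ)
      - Real.log A / εY ≤ (Y.aR (f ζ) (f ξ) : ℝ) - Y.aR (f ζ) (f χ) := by
  have hfξ : f ζ ≠ f ξ := fun h => hζξ (hinj h)
  have hfχ : f ζ ≠ f χ := fun h => hζχ (hinj h)
  set a₁ := X.aR ζ ξ
  set a₂ := X.aR ζ χ
  set b₁ := Y.aR (f ζ) (f ξ)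
  set b₂ := Y.aR (f ζ) (f χ)
  have H := hqs ζ ξ χ hζχ
  rw [Y.rdist_eq εY hfξ, Y.rdist_eq εY hfχ, X.rdist_eq εX hζξ, X.rdist_eq εX hζχ] at H
  have hrat : (2 / εX) * Real.exp (-εX * (a₁ : ℕ)) / ((2 / εX) * Real.exp (-εX * (a₂ : ℕ)))
      = Real.exp (εX * ((a₂ : ℝ) - a₁)) := by
    rw [mul_div_mul_left _ _ (by positivity : (2 / εX) ≠ 0), ← Real.exp_sub]
    ring_nf
  rw [hrat, eta_exp hA] at H
  set α : ℝ := if εX * ((a₂ : ℝ) - a₁) ≤ 0 then α₁ else α₂ with hα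
  rw [show A = Real.exp (Real.log A) from (Real.exp_log hA).symm, ← Real.exp_add,
    mul_comm (Real.exp _) ((2 / εY) * Real.exp (-εY * (b₂ : ℕ))), mul_assoc,
    ← Real.exp_add] at H
  have h2εY : (0:ℝ) < 2 / εY := by positivity
  have H2 : -εY * (b₁ : ℝ) ≤ -εY * (b₂ : ℝ) + (Real.log A + α * (εX * ((a₂:ℝ) - a₁))) :=
    Real.exp_le_exp.1 (le_of_mul_le_mul_left (by linarith [H]) h2εY)
  have hif : (if a₂ ≤ a₁ then α₁ else α₂) = α := by
    rw [hα]
    congr 1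
    rw [eq_iff_iff]
    constructor
    · intro h
      have : (a₂ : ℝ) ≤ a₁ := Nat.cast_le.2 h
      nlinarith
    · intro h
      have : (a₂ : ℝ) - a₁ ≤ 0 := by
        by_contra hc
        push_neg at hc
        nlinarith
      exact_mod_cast Nat.cast_le.1 (by linarith : (a₂:ℝ) ≤ a₁)
  rw [hif]
  rw [show α * εX / εY * ((a₁:ℝ) - a₂) - Real.log A / εY
      = (α * εX * ((a₁:ℝ) - a₂) - Real.log A) / εY by field_simp,
    div_le_iff₀ hεY]
  nlinarith [H2]

end Key

namespace VTree

variable (T : VTree)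

lemma meetDepth_comm (x y : T.V) : T.meetDepth x y = T.meetDepth y x := by
  unfold meetDepth
  congr 1
  ext n
  simp only [Set.mem_setOf_eq]
  rw [min_comm, eq_comm (a := T.anc x n)]

lemma vdist_comm (x y : T.V) : T.vdist x y = T.vdist y x := by
  unfold vdist
  rw [T.meetDepth_comm]
  omega

section Children2

variable (hX : T.TwoChildren)

noncomputable def zeta (x : T.V) : T.Ray := T.rho hX (T.c1 hX x)

noncomputable def xi (x : T.V) : T.Ray := T.rho hX (T.c2 hX x)

lemma anc_c1 (x : T.V) {n : ℕ} (h : n ≤ T.depth x) :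
    T.anc (T.c1 hX x) n = T.anc x n := by
  unfold anc
  rw [T.depth_c1, show T.depth x + 1 - n = (T.depth x - n) + 1 by omega,
    Function.iterate_succ_apply, (T.c_spec hX x).2.2.2.1]

lemma anc_c2 (x : T.V) {n : ℕ} (h : n ≤ T.depth x) :
    T.anc (T.c2 hX x) n = T.anc x n := by
  unfold anc
  rw [T.depth_c2, show T.depth x + 1 - n = (T.depth x - n) + 1 by omega,
    Function.iterate_succ_apply, (T.c_spec hX x).2.2.2.2]

lemma zeta_at (x : T.V) {n : ℕ} (h : n ≤ T.depth x) :
    (T.zeta hX x).1 n = T.anc x n := by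
  unfold zeta
  rw [T.rho_at hX (by rw [T.depth_c1]; omega), T.anc_c1 hX x h]

lemma xi_at (x : T.V) {n : ℕ} (h : n ≤ T.depth x) :
    (T.xi hX x).1 n = T.anc x n := by
  unfold xi
  rw [T.rho_at hX (by rw [T.depth_c2]; omega), T.anc_c2 hX x h]

lemma zeta_self (x : T.V) : (T.zeta hX x).1 (T.depth x) = x := by
  rw [T.zeta_at hX x le_rfl, T.anc_self]

lemma xi_self (x : T.V) : (T.xi hX x).1 (T.depth x) = x := by
  rw [T.xi_at hX x le_rfl, T.anc_self]

lemma zeta_succ (x : T.V) : (T.zeta hX x).1 (T.depth x + 1) = T.c1 hX x := by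
  unfold zeta
  rw [show T.depth x + 1 = T.depth (T.c1 hX x) by rw [T.depth_c1]]
  exact T.rho_self hX _

lemma xi_succ (x : T.V) : (T.xi hX x).1 (T.depth x + 1) = T.c2 hX x := by
  unfold xi
  rw [show T.depth x + 1 = T.depth (T.c2 hX x) by rw [T.depth_c2]]
  exact T.rho_self hX _

lemma zeta_ne_xi (x : T.V) : T.zeta hX x ≠ T.xi hX x := by
  intro h
  exact (T.c_spec hX x).1 (by rw [← T.zeta_succ hX x, h, T.xi_succ hX x])

lemma aR_zeta_xi (x : T.V) : T.aR (T.zeta hX x) (T.xi hX x) = T.depth x :=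
  T.aR_eq_of (T.zeta_ne_xi hX x)
    (by rw [T.zeta_self hX x, T.xi_self hX x])
    (by rw [T.zeta_succ hX x, T.xi_succ hX x]; exact (T.c_spec hX x).1)

end Children2

end VTree

namespace VTree

variable (T : VTree)

lemma meetDepth_le (x y : T.V) : T.meetDepth x y ≤ min (T.depth x) (T.depth y) := by
  unfold meetDepth
  exact csSup_le ⟨0, Nat.zero_le _, by rw [T.anc_zero, T.anc_zero]⟩ fun n hn => hn.1

lemma depth_le_vdist (x y : T.V) : T.depth x ≤ T.vdist x y + T.depth y := by
  have := T.meetDepth_le x y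
  unfold vdist
  omega

lemma ray_zero (ζ : T.Ray) : ζ.1 0 = T.root := ζ.2.1

end VTree

lemma main_bounds {X Y : VTree} (hX : X.TwoChildren) (f : X.Ray → Y.Ray)
    (hinj : Function.Injective f) {L1 L2 lam : ℝ}
    (hL1 : 0 < L1) (hL2 : 0 < L2) (hlam : 0 ≤ lam)
    (KB : ∀ ζ ξ χ : X.Ray, ζ ≠ ξ → ζ ≠ χ → X.aR ζ χ ≤ X.aR ζ ξ →
      (L1 * ((X.aR ζ ξ : ℝ) - (X.aR ζ χ : ℝ)) - lam ≤
        (Y.aR (f ζ) (f ξ) : ℝ) - (Y.aR (f ζ) (f χ) : ℝ)) ∧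
      ((Y.aR (f ζ) (f ξ) : ℝ) - (Y.aR (f ζ) (f χ) : ℝ) ≤
        L2 * ((X.aR ζ ξ : ℝ) - (X.aR ζ χ : ℝ)) + lam))
    (x₁ x₂ : X.V) (hd : X.depth x₁ ≤ X.depth x₂) :
    L1 * (X.vdist x₁ x₂ : ℝ) - 2 * lam ≤
      (Y.vdist ((f (X.zeta hX x₁)).1 (Y.aR (f (X.zeta hX x₁)) (f (X.xi hX x₁))))
        ((f (X.zeta hX x₂)).1 (Y.aR (f (X.zeta hX x₂)) (f (X.xi hX x₂)))) : ℝ) ∧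
    (Y.vdist ((f (X.zeta hX x₁)).1 (Y.aR (f (X.zeta hX x₁)) (f (X.xi hX x₁))))
        ((f (X.zeta hX x₂)).1 (Y.aR (f (X.zeta hX x₂)) (f (X.xi hX x₂)))) : ℝ) ≤
      L2 * (X.vdist x₁ x₂ : ℝ) + 2 * lam := by
  set ζ₁ := X.zeta hX x₁ with hζ₁d
  set ζ₂ := X.zeta hX x₂ with hζ₂d
  set ξ₁ := X.xi hX x₁ with hξ₁d
  set ξ₂ := X.xi hX x₂ with hξ₂d
  set n₁ := X.depth x₁ with hn₁d
  set n₂ := X.depth x₂ with hn₂d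
  set m₁ := Y.aR (f ζ₁) (f ξ₁) with hm₁d
  set m₂ := Y.aR (f ζ₂) (f ξ₂) with hm₂d
  have hz1 : ζ₁ ≠ ξ₁ := X.zeta_ne_xi hX x₁
  have hz2 : ζ₂ ≠ ξ₂ := X.zeta_ne_xi hX x₂
  have hf1 : f ζ₁ ≠ f ξ₁ := fun h => hz1 (hinj h)
  have hf2 : f ζ₂ ≠ f ξ₂ := fun h => hz2 (hinj h)
  have ha1 : X.aR ζ₁ ξ₁ = n₁ := X.aR_zeta_xi hX x₁
  have ha2 : X.aR ζ₂ ξ₂ = n₂ := X.aR_zeta_xi hX x₂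
  have e1 : ζ₁.1 n₁ = x₁ := X.zeta_self hX x₁
  have e2 : ζ₂.1 n₂ = x₂ := X.zeta_self hX x₂
  have hcast : (n₁ : ℝ) ≤ (n₂ : ℝ) := Nat.cast_le.2 hd
  by_cases hzz : ζ₁ = ζ₂
  · -- the two chosen rays coincide
    have e2' : ζ₁.1 n₂ = x₂ := by rw [hzz]; exact e2
    have hvX : (X.vdist x₁ x₂ : ℝ) = |(n₁ : ℝ) - n₂| := by
      rw [← e1, ← e2', X.vdist_ray_self]
    have hm2' : Y.aR (f ζ₁) (f ξ₂) = m₂ := by rw [hzz]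
    have hvY : (Y.vdist ((f ζ₁).1 m₁) ((f ζ₂).1 m₂) : ℝ) = |(m₁ : ℝ) - m₂| := by
      rw [← hzz, Y.vdist_ray_self]
    have hζ₁ξ₂ : ζ₁ ≠ ξ₂ := by rw [hzz]; exact hz2
    have haux : X.aR ζ₁ ξ₂ = n₂ := by rw [hzz]; exact ha2
    have hKB := KB ζ₁ ξ₂ ξ₁ hζ₁ξ₂ hz1 (by rw [ha1, haux]; exact hd)
    rw [ha1, haux, hm2'] at hKB
    simp only [← hm₁d] at hKB
    have p1 : 0 ≤ L1 * ((n₂ : ℝ) - n₁) := mul_nonneg hL1.le (by linarith)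
    have p2 : 0 ≤ L2 * ((n₂ : ℝ) - n₁) := mul_nonneg hL2.le (by linarith)
    rw [hvX, hvY, abs_sub_comm, abs_of_nonneg (by linarith : (0:ℝ) ≤ (n₂:ℝ) - n₁)]
    constructor
    · have h1 := le_abs_self ((m₂ : ℝ) - m₁)
      have h2 : |(m₂ : ℝ) - m₁| = |(m₁ : ℝ) - m₂| := abs_sub_comm _ _
      linarith [hKB.1]
    · rw [abs_sub_le_iff]
      constructor <;> linarith [hKB.1, hKB.2]
  · -- the two chosen rays are distinct
    have hfz : f ζ₁ ≠ f ζ₂ := fun h => hzz (hinj h)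
    set k := X.aR ζ₁ ζ₂ with hkd
    set bY := Y.aR (f ζ₁) (f ζ₂) with hbYd
    have hkc : X.aR ζ₂ ζ₁ = k := by rw [X.aR_comm]
    have hYc : Y.aR (f ζ₂) (f ζ₁) = bY := by rw [Y.aR_comm]
    have hvX : (X.vdist x₁ x₂ : ℝ) = (n₁ : ℝ) + n₂ - 2 * min (min (n₁:ℝ) n₂) (k : ℝ) := by
      rw [← e1, ← e2]
      exact X.vdist_ray ζ₁ ζ₂ n₁ n₂ hzz
    have hvY : (Y.vdist ((f ζ₁).1 m₁) ((f ζ₂).1 m₂) : ℝ)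
        = (m₁ : ℝ) + m₂ - 2 * min (min (m₁:ℝ) m₂) (bY : ℝ) :=
      Y.vdist_ray (f ζ₁) (f ζ₂) m₁ m₂ hfz
    have hmin12 : min (n₁ : ℝ) (n₂ : ℝ) = (n₁ : ℝ) := min_eq_left hcast
    rw [hvX, hvY, hmin12]
    by_cases hk2 : k ≤ n₂
    · -- branch A : k ≤ n₂
      have E2 := KB ζ₂ ξ₂ ζ₁ hz2 (Ne.symm hzz) (by rw [ha2, hkc]; exact hk2)
      rw [ha2, hkc, hYc] at E2
      simp only [← hm₂d, ← hbYd, ← hkd] at E2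
      have hkcast2 : (k : ℝ) ≤ n₂ := Nat.cast_le.2 hk2
      have q1 : 0 ≤ L1 * ((n₂ : ℝ) - k) := mul_nonneg hL1.le (by linarith)
      have q2 : 0 ≤ L2 * ((n₂ : ℝ) - k) := mul_nonneg hL2.le (by linarith)
      rcases le_total k n₁ with hkn | hkn
      · have E1 := KB ζ₁ ξ₁ ζ₂ hz1 hzz (by rw [ha1]; exact hkn)
        rw [ha1] at E1
        simp only [← hm₁d, ← hbYd, ← hkd] at E1
        have hkcast : (k : ℝ) ≤ n₁ := Nat.cast_le.2 hkn
        have p1 : 0 ≤ L1 * ((n₁ : ℝ) - k) := mul_nonneg hL1.le (by linarith)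
        have p2 : 0 ≤ L2 * ((n₁ : ℝ) - k) := mul_nonneg hL2.le (by linarith)
        rw [min_eq_right hkcast]
        rcases min_cases (m₁ : ℝ) (m₂ : ℝ) with ⟨hA1, hA2⟩ | ⟨hA1, hA2⟩ <;>
          rcases min_cases (min (m₁:ℝ) (m₂:ℝ)) (bY : ℝ) with ⟨hB1, hB2⟩ | ⟨hB1, hB2⟩ <;>
          simp only [hA1] at hB1 hB2 ⊢ <;> rw [hB1] <;>
          constructor <;>
          linarith [E1.1, E1.2, E2.1, E2.2]
      · have E1 := KB ζ₁ ζ₂ ξ₁ hzz hz1 (by rw [ha1]; exact hkn)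
        rw [ha1] at E1
        simp only [← hm₁d, ← hbYd, ← hkd] at E1
        have hkcast : (n₁ : ℝ) ≤ k := Nat.cast_le.2 hkn
        have p1 : 0 ≤ L1 * ((k : ℝ) - n₁) := mul_nonneg hL1.le (by linarith)
        have p2 : 0 ≤ L2 * ((k : ℝ) - n₁) := mul_nonneg hL2.le (by linarith)
        rw [min_eq_left hkcast]
        rcases min_cases (m₁ : ℝ) (m₂ : ℝ) with ⟨hA1, hA2⟩ | ⟨hA1, hA2⟩ <;>
          rcases min_cases (min (m₁:ℝ) (m₂:ℝ)) (bY : ℝ) with ⟨hB1, hB2⟩ | ⟨hB1, hB2⟩ <;>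
          simp only [hA1] at hB1 hB2 ⊢ <;> rw [hB1] <;>
          constructor <;>
          linarith [E1.1, E1.2, E2.1, E2.2]
    · -- branch B : n₂ < k
      have hkn2 : n₂ < k := by omega
      have hkn1 : n₁ ≤ k := by omega
      have hkcast2 : (n₂ : ℝ) ≤ k := Nat.cast_le.2 hkn2.le
      have hkcast1 : (n₁ : ℝ) ≤ k := Nat.cast_le.2 hkn1
      have G1 := KB ζ₁ ζ₂ ξ₁ hzz hz1 (by rw [ha1]; exact hkn1)
      rw [ha1] at G1
      simp only [← hm₁d, ← hbYd, ← hkd] at G1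
      have G2 := KB ζ₂ ζ₁ ξ₂ (Ne.symm hzz) hz2 (by rw [ha2, hkc]; exact hkn2.le)
      rw [ha2, hkc, hYc] at G2
      simp only [← hm₂d, ← hbYd, ← hkd] at G2
      have hpre := (X.aR_spec hzz).1
      have hagn2 : ζ₁.1 n₂ = ξ₂.1 n₂ := by
        rw [hpre n₂ (by omega)]
        rw [e2, ← X.xi_self hX x₂]
      have hagn2' : ζ₁.1 (n₂ + 1) ≠ ξ₂.1 (n₂ + 1) := by
        rw [hpre (n₂ + 1) (by omega), X.zeta_succ hX x₂, X.xi_succ hX x₂]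
        exact (X.c_spec hX x₂).1
      have hζ₁ξ₂ : ζ₁ ≠ ξ₂ := fun h => hagn2' (by rw [h])
      have haux : X.aR ζ₁ ξ₂ = n₂ := X.aR_eq_of hζ₁ξ₂ hagn2 hagn2'
      have hξ₂ζ₁ : ξ₂ ≠ ζ₁ := Ne.symm hζ₁ξ₂
      have hξ₂ζ₂ : ξ₂ ≠ ζ₂ := Ne.symm hz2
      have hc1 : X.aR ξ₂ ζ₁ = n₂ := by rw [X.aR_comm]; exact haux
      have hc2 : X.aR ξ₂ ζ₂ = n₂ := by rw [X.aR_comm]; exact ha2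
      have G3 := KB ξ₂ ζ₁ ζ₂ hξ₂ζ₁ hξ₂ζ₂ (by rw [hc1, hc2])
      rw [hc1, hc2] at G3
      set M2 := Y.aR (f ζ₁) (f ξ₂) with hM2d
      have hcy1 : Y.aR (f ξ₂) (f ζ₁) = M2 := by rw [Y.aR_comm]
      have hcy2 : Y.aR (f ξ₂) (f ζ₂) = m₂ := by rw [Y.aR_comm]
      rw [hcy1, hcy2] at G3
      have G4 := KB ζ₁ ξ₂ ξ₁ hζ₁ξ₂ hz1 (by rw [ha1, haux]; exact hd)
      rw [ha1, haux] at G4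
      simp only [← hm₁d, ← hM2d] at G4
      have p1 : 0 ≤ L1 * ((k : ℝ) - n₁) := mul_nonneg hL1.le (by linarith)
      have p2 : 0 ≤ L2 * ((k : ℝ) - n₁) := mul_nonneg hL2.le (by linarith)
      have q1 : 0 ≤ L1 * ((k : ℝ) - n₂) := mul_nonneg hL1.le (by linarith)
      have q2 : 0 ≤ L2 * ((k : ℝ) - n₂) := mul_nonneg hL2.le (by linarith)
      have r1 : 0 ≤ L1 * ((n₂ : ℝ) - n₁) := mul_nonneg hL1.le (by linarith)
      have r2 : 0 ≤ L2 * ((n₂ : ℝ) - n₁) := mul_nonneg hL2.le (by linarith)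
      rw [min_eq_left hkcast1]
      rcases min_cases (m₁ : ℝ) (m₂ : ℝ) with ⟨hA1, hA2⟩ | ⟨hA1, hA2⟩ <;>
        rcases min_cases (min (m₁:ℝ) (m₂:ℝ)) (bY : ℝ) with ⟨hB1, hB2⟩ | ⟨hB1, hB2⟩ <;>
        simp only [hA1] at hB1 hB2 ⊢ <;> rw [hB1] <;>
        constructor <;>
        linarith [G1.1, G1.2, G2.1, G2.2, G3.1, G3.2, G4.1, G4.2]

lemma exists_aR_zero {T : VTree} (hT : T.TwoChildren) (ζ : T.Ray) :
    ∃ χ : T.Ray, ζ ≠ χ ∧ T.aR ζ χ = 0 := by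
  set u := if T.c1 hT T.root = ζ.1 1 then T.c2 hT T.root else T.c1 hT T.root with hu
  have hdu : T.depth u = 1 := by
    rw [hu]
    split_ifs with h
    · rw [T.depth_c2, T.depth_root]
    · rw [T.depth_c1, T.depth_root]
  have h1 : (T.rho hT u).1 1 = u := by
    have h := T.rho_self hT u
    rw [hdu] at h
    exact h
  have hne1 : (T.rho hT u).1 1 ≠ ζ.1 1 := by
    rw [h1, hu]
    split_ifs with h
    · rw [← h]
      exact Ne.symm (T.c_spec hT T.root).1
    · exact h
  have hne : ζ ≠ T.rho hT u := by
    intro hc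
    exact hne1 (by rw [← hc])
  refine ⟨T.rho hT u, hne, T.aR_eq_of hne ?_ (fun hc => hne1 hc.symm)⟩
  rw [T.ray_zero, (T.rho hT u).2.1]


/-- an η-quasisymmetric map f between the boundaries of two rooted trees in
which every vertex has at least two children extends, continuously along geodesics, to a
rough quasiisometry F between the trees with
`L₁|x₁-x₂| - Λ ≤ |F(x₁)-F(x₂)| ≤ L₂|x₁-x₂| + Λ`, where `L₁ = α₁ε_X/ε_Y`,
`L₂ = α₂ε_X/ε_Y`, `Λ = 2 log A/ε_Y`, and with `L = max{1/L₁, L₂}` every vertex of Y is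
within distance `L + Λ` of the image of F. -/
theorem statement16 (εX εY α₁ α₂ A : ℝ) (hεX : 0 < εX) (hεY : 0 < εY)
    (hα₁ : 0 < α₁) (hα₂ : 0 < α₂) (hA : 0 < A)
    (X Y : VTree) (hX : X.TwoChildren) (hY : Y.TwoChildren)
    (f : X.Ray → Y.Ray) (hbij : Function.Bijective f)
    (hqs : ∀ ζ ξ χ : X.Ray, ζ ≠ χ →
      Y.rdist εY (f ζ) (f ξ) ≤
        eta A α₁ α₂ (X.rdist εX ζ ξ / X.rdist εX ζ χ) * Y.rdist εY (f ζ) (f χ)) :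
    ∃ F : X.V → Y.V,
      -- the rough quasiisometry bounds with the sharp constants
      (∀ x₁ x₂ : X.V,
        (α₁ * εX / εY) * (X.vdist x₁ x₂ : ℝ) - 2 * Real.log A / εY ≤
            (Y.vdist (F x₁) (F x₂) : ℝ) ∧
          (Y.vdist (F x₁) (F x₂) : ℝ) ≤
            (α₂ * εX / εY) * (X.vdist x₁ x₂ : ℝ) + 2 * Real.log A / εY) ∧
      -- density: every vertex of Y is within distance L + Λ of the image of F
      (∀ y : Y.V, ∃ x : X.V, (Y.vdist (F x) y : ℝ) ≤
        max (εY / (α₁ * εX)) (α₂ * εX / εY) + 2 * Real.log A / εY) ∧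
      -- F extends continuously along geodesics in X to f
      (∀ ζ : X.Ray, ∀ m : ℕ, ∃ N : ℕ, ∀ n : ℕ, N ≤ n →
        Y.anc (F (ζ.1 n)) m = (f ζ).1 m) := by
  obtain ⟨hinj, hsurj⟩ := hbij
  set L1 : ℝ := α₁ * εX / εY with hL1def
  set L2 : ℝ := α₂ * εX / εY with hL2def
  set lam : ℝ := Real.log A / εY with hlamdef
  have hL1 : 0 < L1 := by rw [hL1def]; positivity
  have hL2 : 0 < L2 := by rw [hL2def]; positivity
  -- A ≥ 1, so lam ≥ 0
  have hA1 : 1 ≤ A := by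
    have hne := X.zeta_ne_xi hX X.root
    have hfne : f (X.zeta hX X.root) ≠ f (X.xi hX X.root) := fun h => hne (hinj h)
    have H := hqs (X.zeta hX X.root) (X.xi hX X.root) (X.xi hX X.root) hne
    rw [div_self (ne_of_gt (X.rdist_pos hεX hne))] at H
    have hpos := Y.rdist_pos hεY hfne
    have : eta A α₁ α₂ 1 = A := by
      unfold eta
      rw [if_pos le_rfl, Real.one_rpow, mul_one]
    rw [this] at H
    nlinarith
  have hlam : 0 ≤ lam := by
    rw [hlamdef]
    exact div_nonneg (Real.log_nonneg hA1) (le_of_lt hεY)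
  -- the fundamental two-sided estimate from quasisymmetry
  have KB : ∀ ζ ξ χ : X.Ray, ζ ≠ ξ → ζ ≠ χ → X.aR ζ χ ≤ X.aR ζ ξ →
      (L1 * ((X.aR ζ ξ : ℝ) - (X.aR ζ χ : ℝ)) - lam ≤
        (Y.aR (f ζ) (f ξ) : ℝ) - (Y.aR (f ζ) (f χ) : ℝ)) ∧
      ((Y.aR (f ζ) (f ξ) : ℝ) - (Y.aR (f ζ) (f χ) : ℝ) ≤
        L2 * ((X.aR ζ ξ : ℝ) - (X.aR ζ χ : ℝ)) + lam) := by
    intro ζ ξ χ hζξ hζχ hle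
    constructor
    · have H := key_main hεX hεY hA hinj hqs hζξ hζχ
      rw [if_pos hle] at H
      exact H
    · have H := key_main hεX hεY hA hinj hqs hζχ hζξ
      rcases eq_or_lt_of_le hle with heq | hlt
      · rw [if_pos (le_of_eq heq.symm)] at H
        rw [heq]
        have : ((X.aR ζ ξ : ℝ) - (X.aR ζ ξ : ℝ)) = 0 := by ring
        rw [heq] at H
        nlinarith
      · rw [if_neg (by omega)] at H
        nlinarith
  -- the construction
  set mm : X.V → ℕ := fun x => Y.aR (f (X.zeta hX x)) (f (X.xi hX x)) with hmmdef
  set F : X.V → Y.V := fun x => (f (X.zeta hX x)).1 (mm x) with hFdef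
  have hfzx : ∀ x : X.V, f (X.zeta hX x) ≠ f (X.xi hX x) :=
    fun x h => X.zeta_ne_xi hX x (hinj h)
  have hFx : ∀ x : X.V, F x = (f (X.zeta hX x)).1 (mm x) := fun x => rfl
  -- main two-sided bound, assuming depth x₁ ≤ depth x₂
  have hmain : ∀ x₁ x₂ : X.V, X.depth x₁ ≤ X.depth x₂ →
      L1 * (X.vdist x₁ x₂ : ℝ) - 2 * lam ≤ (Y.vdist (F x₁) (F x₂) : ℝ) ∧
      (Y.vdist (F x₁) (F x₂) : ℝ) ≤ L2 * (X.vdist x₁ x₂ : ℝ) + 2 * lam := by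
    intro x₁ x₂ hd
    exact main_bounds hX f hinj hL1 hL2 hlam KB x₁ x₂ hd
  have hmain' : ∀ x₁ x₂ : X.V,
      L1 * (X.vdist x₁ x₂ : ℝ) - 2 * lam ≤ (Y.vdist (F x₁) (F x₂) : ℝ) ∧
      (Y.vdist (F x₁) (F x₂) : ℝ) ≤ L2 * (X.vdist x₁ x₂ : ℝ) + 2 * lam := by
    intro x₁ x₂
    rcases le_total (X.depth x₁) (X.depth x₂) with h | h
    · exact hmain x₁ x₂ h
    · have := hmain x₂ x₁ h
      rw [X.vdist_comm x₂ x₁, Y.vdist_comm (F x₂) (F x₁)] at this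
      exact this
  -- growth of mm along a ray
  have hgrow : ∀ (ζ : X.Ray) (n : ℕ), L1 * n - lam ≤ (mm (ζ.1 n) : ℝ) := by
    intro ζ n
    obtain ⟨χ, hne, haR0⟩ := exists_aR_zero hX (X.zeta hX (ζ.1 n))
    have hz1 := X.zeta_ne_xi hX (ζ.1 n)
    have ha1 : X.aR (X.zeta hX (ζ.1 n)) (X.xi hX (ζ.1 n)) = n := by
      rw [X.aR_zeta_xi hX (ζ.1 n), X.ray_depth]
    have hKB := (KB (X.zeta hX (ζ.1 n)) (X.xi hX (ζ.1 n)) χ hz1 hne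
      (by rw [haR0]; exact Nat.zero_le _)).1
    rw [ha1, haR0] at hKB
    have h0 : (0:ℝ) ≤ (Y.aR (f (X.zeta hX (ζ.1 n))) (f χ) : ℝ) := Nat.cast_nonneg _
    have hmmeq : (mm (ζ.1 n) : ℝ) = (Y.aR (f (X.zeta hX (ζ.1 n))) (f (X.xi hX (ζ.1 n))) : ℝ) := rfl
    rw [hmmeq]
    push_cast at hKB ⊢
    linarith
  -- agreement depth of the image ray with f ζ
  have hagree : ∀ (ζ : X.Ray) (n : ℕ), f (X.zeta hX (ζ.1 n)) ≠ f ζ →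
      (mm (ζ.1 n) : ℝ) - lam ≤ (Y.aR (f (X.zeta hX (ζ.1 n))) (f ζ) : ℝ) := by
    intro ζ n hne'
    have hzζ : X.zeta hX (ζ.1 n) ≠ ζ := fun h => hne' (by rw [h])
    have hz1 := X.zeta_ne_xi hX (ζ.1 n)
    have ha1 : X.aR (X.zeta hX (ζ.1 n)) (X.xi hX (ζ.1 n)) = n := by
      rw [X.aR_zeta_xi hX (ζ.1 n), X.ray_depth]
    have hagn : (X.zeta hX (ζ.1 n)).1 n = ζ.1 n := by
      have h := X.zeta_self hX (ζ.1 n)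
      rw [X.ray_depth] at h
      exact h
    have hk : n ≤ X.aR (X.zeta hX (ζ.1 n)) ζ := X.le_aR hzζ hagn
    have hKB := (KB (X.zeta hX (ζ.1 n)) ζ (X.xi hX (ζ.1 n)) hzζ hz1 (by rw [ha1]; exact hk)).1
    rw [ha1] at hKB
    have hkc : (n : ℝ) ≤ (X.aR (X.zeta hX (ζ.1 n)) ζ : ℝ) := Nat.cast_le.2 hk
    have hprod : 0 ≤ L1 * ((X.aR (X.zeta hX (ζ.1 n)) ζ : ℝ) - n) :=
      mul_nonneg hL1.le (by linarith)
    have hmmeq : (mm (ζ.1 n) : ℝ) = (Y.aR (f (X.zeta hX (ζ.1 n))) (f (X.xi hX (ζ.1 n))) : ℝ) := rfl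
    rw [hmmeq]
    linarith
  refine ⟨F, ?_, ?_, ?_⟩
  · intro x₁ x₂
    have h := hmain' x₁ x₂
    constructor
    · calc α₁ * εX / εY * (X.vdist x₁ x₂ : ℝ) - 2 * Real.log A / εY
          = L1 * (X.vdist x₁ x₂ : ℝ) - 2 * lam := by rw [hL1def, hlamdef]; ring
        _ ≤ _ := h.1
    · calc (Y.vdist (F x₁) (F x₂) : ℝ) ≤ L2 * (X.vdist x₁ x₂ : ℝ) + 2 * lam := h.2
        _ = α₂ * εX / εY * (X.vdist x₁ x₂ : ℝ) + 2 * Real.log A / εY := by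
            rw [hL2def, hlamdef]; ring
  · -- density
    have hl2 : 2 * Real.log A / εY = 2 * lam := by rw [hlamdef]; ring
    have hroot : (mm X.root : ℝ) ≤ lam := by
      obtain ⟨χ', hne', haR0'⟩ := exists_aR_zero hY (f (X.zeta hX X.root))
      obtain ⟨χ, hfχ⟩ := hsurj χ'
      have hz1 := X.zeta_ne_xi hX X.root
      have hζrχ : X.zeta hX X.root ≠ χ := by
        intro h
        exact hne' (by rw [h, hfχ])
      have ha1 : X.aR (X.zeta hX X.root) (X.xi hX X.root) = 0 := by
        rw [X.aR_zeta_xi hX X.root, X.depth_root]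
      have hKB := (KB (X.zeta hX X.root) χ (X.xi hX X.root) hζrχ hz1
        (by rw [ha1]; exact Nat.zero_le _)).1
      rw [ha1, hfχ, haR0'] at hKB
      have h0 : (0:ℝ) ≤ (X.aR (X.zeta hX X.root) χ : ℝ) := Nat.cast_nonneg _
      have hprod : 0 ≤ L1 * ((X.aR (X.zeta hX X.root) χ : ℝ) - 0) :=
        mul_nonneg hL1.le (by linarith)
      have hmmeq : (mm X.root : ℝ) = (Y.aR (f (X.zeta hX X.root)) (f (X.xi hX X.root)) : ℝ) := rfl
      rw [hmmeq]
      push_cast at hKB hprod ⊢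
      linarith
    intro y
    obtain ⟨ζ, hfζ⟩ := hsurj (Y.zeta hY y)
    set j := Y.depth y with hjd
    have hyy : (f ζ).1 j = y := by rw [hfζ]; exact Y.zeta_self hY y
    have hex : ∃ n, j ≤ mm (ζ.1 n) := by
      obtain ⟨n, hn⟩ := exists_nat_ge (((j:ℝ) + lam) / L1)
      refine ⟨n, ?_⟩
      rw [div_le_iff₀ hL1] at hn
      have h1 := hgrow ζ n
      have : (j : ℝ) ≤ (mm (ζ.1 n) : ℝ) := by nlinarith
      exact_mod_cast this
    set n := Nat.find hex with hnd
    have hn : j ≤ mm (ζ.1 n) := Nat.find_spec hex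
    set M := max (εY / (α₁ * εX)) L2 with hMd
    have hM2 : L2 ≤ M := le_max_right _ _
    have hM0 : 0 ≤ M := le_trans hL2.le hM2
    have hOver : (mm (ζ.1 n) : ℝ) ≤ (j:ℝ) + M + 2 * lam := by
      rcases Nat.eq_zero_or_pos n with h0 | hpos
      · have : ζ.1 n = X.root := by rw [h0]; exact X.ray_zero ζ
        rw [this]
        have hj0 : (0:ℝ) ≤ (j:ℝ) := Nat.cast_nonneg _
        linarith [hroot]
      · have hprev : ¬ j ≤ mm (ζ.1 (n - 1)) := Nat.find_min hex (by omega)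
        have hprev' : (mm (ζ.1 (n-1)) : ℝ) ≤ (j:ℝ) - 1 := by
          have : mm (ζ.1 (n-1)) + 1 ≤ j := by omega
          have := (Nat.cast_le (α := ℝ)).2 this
          push_cast at this
          linarith
        have hstep := (hmain' (ζ.1 (n-1)) (ζ.1 n)).2
        have hvd1 : (X.vdist (ζ.1 (n-1)) (ζ.1 n) : ℝ) = 1 := by
          rw [X.vdist_ray_self]
          rw [show ((n - 1 : ℕ) : ℝ) = (n : ℝ) - 1 by
            rw [Nat.cast_sub (by omega)]; norm_num]
          rw [abs_of_nonpos (by linarith)]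
          ring
        rw [hvd1, mul_one] at hstep
        have hdepF : Y.depth (F (ζ.1 n)) = mm (ζ.1 n) := Y.ray_depth _ _
        have hdepF' : Y.depth (F (ζ.1 (n-1))) = mm (ζ.1 (n-1)) := Y.ray_depth _ _
        have hdl := Y.depth_le_vdist (F (ζ.1 n)) (F (ζ.1 (n-1)))
        rw [hdepF, hdepF', Y.vdist_comm] at hdl
        have hdl' := (Nat.cast_le (α := ℝ)).2 hdl
        push_cast at hdl'
        linarith
    refine ⟨ζ.1 n, ?_⟩
    rw [hl2]
    have hjmn : (j : ℝ) ≤ (mm (ζ.1 n) : ℝ) := Nat.cast_le.2 hn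
    by_cases hcase : f (X.zeta hX (ζ.1 n)) = f ζ
    · have hvd : (Y.vdist (F (ζ.1 n)) y : ℝ) = |(mm (ζ.1 n) : ℝ) - j| := by
        rw [← hyy]
        rw [show F (ζ.1 n) = (f (X.zeta hX (ζ.1 n))).1 (mm (ζ.1 n)) from rfl, hcase]
        exact Y.vdist_ray_self (f ζ) _ j
      rw [hvd, abs_of_nonneg (by linarith)]
      linarith
    · have hb := hagree ζ n hcase
      have hvd : (Y.vdist (F (ζ.1 n)) y : ℝ) = (mm (ζ.1 n) : ℝ) + j -
          2 * min (min ((mm (ζ.1 n) : ℕ) : ℝ) (j:ℝ)) ((Y.aR (f (X.zeta hX (ζ.1 n))) (f ζ) : ℕ) : ℝ) := by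
        rw [← hyy]
        exact Y.vdist_ray (f (X.zeta hX (ζ.1 n))) (f ζ) (mm (ζ.1 n)) j hcase
      rw [hvd, min_eq_right hjmn]
      rcases min_cases ((j:ℕ):ℝ) ((Y.aR (f (X.zeta hX (ζ.1 n))) (f ζ) : ℕ) : ℝ) with
        ⟨hm1, hm2⟩ | ⟨hm1, hm2⟩ <;> rw [hm1] <;> linarith
  · -- continuity along geodesics
    intro ζ m
    obtain ⟨N, hN⟩ := exists_nat_ge (((m:ℝ) + 2 * lam) / L1)
    refine ⟨N, fun n hn => ?_⟩
    have hg := hgrow ζ n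
    rw [div_le_iff₀ hL1] at hN
    have hNn := mul_le_mul_of_nonneg_left ((Nat.cast_le (α := ℝ)).2 hn) hL1.le
    have hLn : (m:ℝ) + 2 * lam ≤ L1 * n := by
      calc (m:ℝ) + 2 * lam ≤ N * L1 := hN
        _ = L1 * N := by ring
        _ ≤ L1 * n := hNn
    have hmn : m ≤ mm (ζ.1 n) := by
      have : (m:ℝ) ≤ (mm (ζ.1 n) : ℝ) := by linarith
      exact_mod_cast this
    have hanc : Y.anc (F (ζ.1 n)) m = (f (X.zeta hX (ζ.1 n))).1 m :=
      Y.ray_anc (f (X.zeta hX (ζ.1 n))) hmn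
    by_cases hcase : f (X.zeta hX (ζ.1 n)) = f ζ
    · rw [hanc, hcase]
    · have hb := hagree ζ n hcase
      have hmb : m ≤ Y.aR (f (X.zeta hX (ζ.1 n))) (f ζ) := by
        have : (m:ℝ) ≤ (Y.aR (f (X.zeta hX (ζ.1 n))) (f ζ) : ℝ) := by linarith
        exact_mod_cast this
      rw [hanc]
      exact (Y.aR_spec hcase).1 m hmb
end
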